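/- arXiv:2003.03042 — 7 statements merged into one kernel-verified Lean document; each statement's English description precedes it below -/
import Mathlib

section
/- Under consistency, mean exchangeability and positivity, the subgroup-specific potential outcome mean is identified by the g-formula: for every measurable subgroup w ⊆ 𝒳 with P(X ∈ w) > 0, and for any version m_a of the outcome regression E[Y | X, A = a], one has (1/P(X ∈ w)) ∫_{{X ∈ w}} Y^a dP = (1/P(X ∈ w)) ∫_{{X ∈ w}} m_a(X) dP; that is, E[Y^a | X ∈ w] = E[E[Y | X, A = a] | X ∈ w]. -/
/-!
By consistency and mean exchangeability, `∫_{X ∈ B, A = a} (ν - m)(X) dP = 0` for every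
measurable `B`. Pulling the `X`-measurable factor `ν - m` out of the conditional expectation given
`X` turns this into `(ν - m)(X) · e(X) = 0` almost surely, and positivity of the propensity score
gives `ν(X) = m(X)` almost surely. Integrating over `{X ∈ w}` identifies `E[Y^a | X ∈ w]`.
-/

open MeasureTheory

section ConditionalExpectation

variable {Ω : Type*} {m m₀ : MeasurableSpace Ω} {μ : Measure Ω}

theorem ae_eq_zero_of_setIntegral_inter_eq_zero (hm : m ≤ m₀) [IsFiniteMeasure μ]
    {f : Ω → ℝ} {s : Set Ω} (hf : StronglyMeasurable[m] f) (hfi : Integrable f μ)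
    (hs : MeasurableSet s) (hcond : ∀ᵐ x ∂μ, μ[s.indicator (1 : Ω → ℝ) | m] x ≠ 0)
    (hzero : ∀ t, MeasurableSet[m] t → ∫ x in t ∩ s, f x ∂μ = 0) :
    f =ᵐ[μ] 0 := by
  have hmul : f * s.indicator 1 = s.indicator f := by
    ext x
    by_cases hx : x ∈ s <;> simp [hx]
  have hone : Integrable (s.indicator (1 : Ω → ℝ)) μ := (integrable_const 1).indicator hs
  have hcondExp_zero : (0 : Ω → ℝ) =ᵐ[μ] μ[s.indicator f | m] :=
    ae_eq_condExp_of_forall_setIntegral_eq hm (hfi.indicator hs)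
      (fun _ _ _ => integrableOn_zero)
      (fun t ht _ => by simp [setIntegral_indicator hs, hzero t ht])
      stronglyMeasurable_const.aestronglyMeasurable
  have hpull : μ[s.indicator f | m] =ᵐ[μ] f * μ[s.indicator (1 : Ω → ℝ) | m] := by
    rw [← hmul]
    exact condExp_mul_of_stronglyMeasurable_left hf (hmul ▸ hfi.indicator hs) hone
  filter_upwards [hcondExp_zero, hpull, hcond] with x h0 hp hx
  exact (mul_eq_zero.mp (hp ▸ h0).symm).resolve_right hx

end ConditionalExpectation

section Comap

variable {Ω 𝒳 : Type*} [MeasurableSpace Ω] [MeasurableSpace 𝒳] {μ : Measure Ω}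

theorem comp_ae_eq_condExp_comap_of_forall_setIntegral_eq [IsFiniteMeasure μ] {X : Ω → 𝒳}
    (hX : Measurable X) {f : Ω → ℝ} (hfi : Integrable f μ) {g : 𝒳 → ℝ} (hg : Measurable g)
    (hgi : Integrable (fun ω => g (X ω)) μ)
    (h : ∀ B, MeasurableSet B → ∫ ω in X ⁻¹' B, g (X ω) ∂μ = ∫ ω in X ⁻¹' B, f ω ∂μ) :
    (fun ω => g (X ω)) =ᵐ[μ] μ[f | MeasurableSpace.comap X ‹_›] :=
  ae_eq_condExp_of_forall_setIntegral_eq hX.comap_le hfi (fun _ _ _ => hgi.integrableOn)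
    (by rintro _ ⟨B, hB, rfl⟩ _; exact h B hB)
    (hg.comp (comap_measurable X)).aestronglyMeasurable

end Comap

theorem ae_potentialOutcome_eq_of_consistency {Ω : Type*} [MeasurableSpace Ω] {P : Measure Ω}
    {A Y Y1 Y0 : Ω → ℝ} {a : ℝ} (ha : a = 0 ∨ a = 1)
    (hcons : ∀ᵐ ω ∂P, Y ω = A ω * Y1 ω + (1 - A ω) * Y0 ω) :
    ∀ᵐ ω ∂P, A ω = a → (if a = 1 then Y1 else Y0) ω = Y ω := by
  filter_upwards [hcons] with ω hω hAa
  rcases ha with rfl | rfl <;> simp [hω, hAa]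

theorem gformula_identification_general
    {Ω : Type*} [MeasurableSpace Ω] (P : Measure Ω) [IsProbabilityMeasure P]
    {𝒳 : Type*} [MeasurableSpace 𝒳]
    (X : Ω → 𝒳) (hX : Measurable X)
    (A : Ω → ℝ) (hA : Measurable A)
    (Y : Ω → ℝ)
    (a : ℝ) (ha : a = 0 ∨ a = 1)
    (Y1 Y0 : Ω → ℝ)
    (Ya : Ω → ℝ) (hYa : Ya = if a = 1 then Y1 else Y0)
    -- consistency of potential outcomes
    (hcons : ∀ᵐ ω ∂P, Y ω = A ω * Y1 ω + (1 - A ω) * Y0 ω)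
    -- a version of the propensity score
    (e : 𝒳 → ℝ) (he : Measurable e)
    (hePS : ∀ B : Set 𝒳, MeasurableSet B →
      ∫ ω in X ⁻¹' B, e (X ω) ∂P = (P (X ⁻¹' B ∩ {ω | A ω = a})).toReal)
    -- a version of the outcome regression E[Y | X, A = a]
    (m : 𝒳 → ℝ) (hm : Measurable m)
    (hmint : Integrable (fun ω => m (X ω)) P)
    (hmOR : ∀ B : Set 𝒳, MeasurableSet B →
      ∫ ω in X ⁻¹' B ∩ {ω | A ω = a}, Y ω ∂P
        = ∫ ω in X ⁻¹' B ∩ {ω | A ω = a}, m (X ω) ∂P)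
    -- a version of E[Y^a | X]
    (ν : 𝒳 → ℝ) (hν : Measurable ν)
    (hνint : Integrable (fun ω => ν (X ω)) P)
    (hνCE : ∀ B : Set 𝒳, MeasurableSet B →
      ∫ ω in X ⁻¹' B, Ya ω ∂P = ∫ ω in X ⁻¹' B, ν (X ω) ∂P)
    -- mean exchangeability
    (hexch : ∀ B : Set 𝒳, MeasurableSet B →
      ∫ ω in X ⁻¹' B ∩ {ω | A ω = a}, Ya ω ∂P
        = ∫ ω in X ⁻¹' B ∩ {ω | A ω = a}, ν (X ω) ∂P)
    -- positivity
    (ε : ℝ) (hε : 0 < ε)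
    (hpos : ∀ᵐ ω ∂P, ε ≤ e (X ω) ∧ e (X ω) ≤ 1 - ε)
    -- the subgroup
    (w : Set 𝒳) (hw : MeasurableSet w) :
    (1 / (P (X ⁻¹' w)).toReal) * ∫ ω in X ⁻¹' w, Ya ω ∂P
      = (1 / (P (X ⁻¹' w)).toReal) * ∫ ω in X ⁻¹' w, m (X ω) ∂P := by
  set s := {ω | A ω = a}
  have hs : MeasurableSet s := hA (measurableSet_singleton a)
  have he_int : Integrable (fun ω => e (X ω)) P :=
    .of_bound (he.comp hX).aestronglyMeasurable 1 (by
      filter_upwards [hpos] with ω hω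
      exact abs_le.mpr ⟨by linarith [hω.1], by linarith [hω.2]⟩)
  have hpropensity : (fun ω => e (X ω)) =ᵐ[P] P[s.indicator 1 | MeasurableSpace.comap X ‹_›] :=
    comp_ae_eq_condExp_comap_of_forall_setIntegral_eq hX ((integrable_const 1).indicator hs) he
      he_int (fun B hB => by simp [hePS B hB, setIntegral_indicator hs, measureReal_def])
  have hYa_eq : ∀ᵐ ω ∂P, A ω = a → Ya ω = Y ω :=
    hYa ▸ ae_potentialOutcome_eq_of_consistency ha hcons
  have hdiff : ∀ B, MeasurableSet B → ∫ ω in X ⁻¹' B ∩ s, (ν (X ω) - m (X ω)) ∂P = 0 := by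
    intro B hB
    have hYa_Y : ∫ ω in X ⁻¹' B ∩ s, Ya ω ∂P = ∫ ω in X ⁻¹' B ∩ s, Y ω ∂P :=
      setIntegral_congr_ae ((hX hB).inter hs) (by
        filter_upwards [hYa_eq] with ω hω hmem
        exact hω hmem.2)
    rw [integral_sub hνint.integrableOn hmint.integrableOn, ← hexch B hB, ← hmOR B hB, hYa_Y,
      sub_self]
  have hνm : (fun ω => ν (X ω) - m (X ω)) =ᵐ[P] 0 :=
    ae_eq_zero_of_setIntegral_inter_eq_zero hX.comap_le
      ((hν.sub hm).comp (comap_measurable X)).stronglyMeasurable (hνint.sub hmint) hs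
      (by
        filter_upwards [hpropensity, hpos] with ω hω hεω
        rw [← hω]
        exact (hε.trans_le hεω.1).ne')
      (by rintro _ ⟨B, hB, rfl⟩; exact hdiff B hB)
  rw [hνCE w hw, setIntegral_congr_ae (hX hw) (by
    filter_upwards [hνm] with ω hω _
    exact sub_eq_zero.mp hω)]

/-- Under consistency, mean exchangeability and positivity, the
subgroup-specific potential outcome mean is identified by the g-formula:
`E[Y^a | X ∈ w] = E[E[Y | X, A = a] | X ∈ w]`. -/
theorem gformula_identification
    {Ω : Type*} [MeasurableSpace Ω] (P : Measure Ω) [IsProbabilityMeasure P]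
    {𝒳 : Type*} [MeasurableSpace 𝒳]
    (X : Ω → 𝒳) (hX : Measurable X)
    (A : Ω → ℝ) (hA : Measurable A) (hA01 : ∀ ω, A ω = 0 ∨ A ω = 1)
    (Y : Ω → ℝ) (hY : Measurable Y) (hYint : Integrable Y P)
    (a : ℝ) (ha : a = 0 ∨ a = 1)
    (Y1 Y0 : Ω → ℝ) (hY1m : Measurable Y1) (hY0m : Measurable Y0)
    (hY1int : Integrable Y1 P) (hY0int : Integrable Y0 P)
    (Ya : Ω → ℝ) (hYa : Ya = if a = 1 then Y1 else Y0)
    -- consistency of potential outcomes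
    (hcons : ∀ᵐ ω ∂P, Y ω = A ω * Y1 ω + (1 - A ω) * Y0 ω)
    -- a version of the propensity score
    (e : 𝒳 → ℝ) (he : Measurable e)
    (hePS : ∀ B : Set 𝒳, MeasurableSet B →
      ∫ ω in X ⁻¹' B, e (X ω) ∂P = (P (X ⁻¹' B ∩ {ω | A ω = a})).toReal)
    -- a version of the outcome regression E[Y | X, A = a]
    (m : 𝒳 → ℝ) (hm : Measurable m)
    (hmint : Integrable (fun ω => m (X ω)) P)
    (hmOR : ∀ B : Set 𝒳, MeasurableSet B →
      ∫ ω in X ⁻¹' B ∩ {ω | A ω = a}, Y ω ∂P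
        = ∫ ω in X ⁻¹' B ∩ {ω | A ω = a}, m (X ω) ∂P)
    -- a version of E[Y^a | X]
    (ν : 𝒳 → ℝ) (hν : Measurable ν)
    (hνint : Integrable (fun ω => ν (X ω)) P)
    (hνCE : ∀ B : Set 𝒳, MeasurableSet B →
      ∫ ω in X ⁻¹' B, Ya ω ∂P = ∫ ω in X ⁻¹' B, ν (X ω) ∂P)
    -- mean exchangeability
    (hexch : ∀ B : Set 𝒳, MeasurableSet B →
      ∫ ω in X ⁻¹' B ∩ {ω | A ω = a}, Ya ω ∂P
        = ∫ ω in X ⁻¹' B ∩ {ω | A ω = a}, ν (X ω) ∂P)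
    -- positivity
    (ε : ℝ) (hε : 0 < ε)
    (hpos : ∀ᵐ ω ∂P, ε ≤ e (X ω) ∧ e (X ω) ≤ 1 - ε)
    -- the subgroup
    (w : Set 𝒳) (hw : MeasurableSet w)
    (hwpos : 0 < (P (X ⁻¹' w)).toReal) :
    (1 / (P (X ⁻¹' w)).toReal) * ∫ ω in X ⁻¹' w, Ya ω ∂P
      = (1 / (P (X ⁻¹' w)).toReal) * ∫ ω in X ⁻¹' w, m (X ω) ∂P :=
  gformula_identification_general P X hX A hA Y a ha Y1 Y0 Ya hYa hcons e he hePS m hm hmint hmOR ν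
    hν hνint hνCE hexch ε hε hpos w hw
end

section
/- Under consistency, mean exchangeability and positivity, the subgroup-specific potential outcome mean admits the inverse probability weighting representation: for every measurable subgroup w ⊆ 𝒳 with P(X ∈ w) > 0, ∫_{{X ∈ w}} Y^a dP = ∫_Ω 1{X ∈ w} · 1{A = a} · Y / e_a(X) dP; that is, E[Y^a | X ∈ w] = (1/P(X ∈ w)) · E[ 1{X ∈ w, A = a} Y / e_a(X) ]. -/
/-!
With `S = {A = a}`, mean exchangeability and the propensity score identify
`E[1_S Y^a | X] = E[1_S ν(X) | X] = ν(X) E[1_S | X] = ν(X) e(X)`. Weighting by the bounded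
`σ(X)`-measurable factor `1_w(X) / e(X)` and using the tower property turns
`∫ 1_w(X) 1_S Y^a / e(X)` into `∫_{X ∈ w} ν(X) = ∫_{X ∈ w} Y^a`; consistency replaces
`1_S Y^a` by the observed `1_S Y`.
-/

open MeasureTheory

section CondExp

variable {Ω : Type*} {m m₀ : MeasurableSpace Ω} {μ : Measure Ω}

theorem condExp_ae_eq_condExp_of_forall_setIntegral_eq (hm : m ≤ m₀) [SigmaFinite (μ.trim hm)]
    {f g : Ω → ℝ} (hf : Integrable f μ) (hg : Integrable g μ)
    (hfg : ∀ s, MeasurableSet[m] s → ∫ x in s, f x ∂μ = ∫ x in s, g x ∂μ) :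
    μ[f | m] =ᵐ[μ] μ[g | m] :=
  ae_eq_condExp_of_forall_setIntegral_eq hm hg (fun _ _ _ ↦ integrable_condExp.integrableOn)
    (fun s hs _ ↦ by rw [setIntegral_condExp hm hf hs, hfg s hs])
    stronglyMeasurable_condExp.aestronglyMeasurable

theorem integral_mul_condExp (hm : m ≤ m₀) [SigmaFinite (μ.trim hm)] {f g : Ω → ℝ}
    (hg : StronglyMeasurable[m] g) (hf : Integrable f μ) (hgf : Integrable (g * f) μ) :
    ∫ x, g x * μ[f | m] x ∂μ = ∫ x, g x * f x ∂μ := by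
  calc ∫ x, g x * μ[f | m] x ∂μ = ∫ x, μ[g * f | m] x ∂μ :=
        integral_congr_ae (condExp_mul_of_stronglyMeasurable_left hg hgf hf).symm
    _ = ∫ x, g x * f x ∂μ := integral_condExp hm

end CondExp

section Comap

variable {Ω 𝒳 : Type*} [MeasurableSpace Ω] [MeasurableSpace 𝒳] {P : Measure Ω}
  [IsFiniteMeasure P] {X : Ω → 𝒳}

theorem condExp_comap_ae_eq_of_forall_setIntegral_preimage_eq (hX : Measurable X)
    {f g : Ω → ℝ} (hf : Integrable f P) (hg : Integrable g P)
    (hfg : ∀ B, MeasurableSet B → ∫ ω in X ⁻¹' B, f ω ∂P = ∫ ω in X ⁻¹' B, g ω ∂P) :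
    P[f | .comap X inferInstance] =ᵐ[P] P[g | .comap X inferInstance] :=
  condExp_ae_eq_condExp_of_forall_setIntegral_eq hX.comap_le hf hg
    (by rintro _ ⟨B, hB, rfl⟩; exact hfg B hB)

theorem condExp_comap_ae_eq_comp_of_forall_setIntegral_preimage_eq (hX : Measurable X)
    {f : Ω → ℝ} {φ : 𝒳 → ℝ} (hf : Integrable f P) (hφ : Measurable φ)
    (hφX : Integrable (φ ∘ X) P)
    (hfφ : ∀ B, MeasurableSet B → ∫ ω in X ⁻¹' B, f ω ∂P = ∫ ω in X ⁻¹' B, φ (X ω) ∂P) :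
    P[f | .comap X inferInstance] =ᵐ[P] φ ∘ X := by
  refine (condExp_comap_ae_eq_of_forall_setIntegral_preimage_eq hX hf hφX hfφ).trans
    (Filter.EventuallyEq.of_eq ?_)
  exact condExp_of_stronglyMeasurable hX.comap_le
    (hφ.comp (comap_measurable X)).stronglyMeasurable hφX

theorem integral_comp_mul_condExp_comap (hX : Measurable X) {g : 𝒳 → ℝ} (hg : Measurable g)
    {C : ℝ} (hgC : ∀ᵐ ω ∂P, ‖g (X ω)‖ ≤ C) {f : Ω → ℝ} (hf : Integrable f P) :
    ∫ ω, g (X ω) * P[f | .comap X inferInstance] ω ∂P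
      = ∫ ω, g (X ω) * f ω ∂P :=
  integral_mul_condExp hX.comap_le (hg.comp (comap_measurable X)).stronglyMeasurable hf
    (hf.bdd_mul (hg.comp hX).aestronglyMeasurable hgC)

theorem condExp_indicator_ae_eq_mul_propensity (hX : Measurable X) {A Ya : Ω → ℝ} {a : ℝ}
    (hA : Measurable A) (hYa : Integrable Ya P) {e ν : 𝒳 → ℝ} (he : Measurable e)
    (heX : Integrable (e ∘ X) P)
    (hePS : ∀ B : Set 𝒳, MeasurableSet B →
      ∫ ω in X ⁻¹' B, e (X ω) ∂P = (P (X ⁻¹' B ∩ {ω | A ω = a})).toReal)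
    (hν : Measurable ν) (hνX : Integrable (ν ∘ X) P)
    (hexch : ∀ B : Set 𝒳, MeasurableSet B →
      ∫ ω in X ⁻¹' B ∩ {ω | A ω = a}, Ya ω ∂P
        = ∫ ω in X ⁻¹' B ∩ {ω | A ω = a}, ν (X ω) ∂P) :
    P[{ω | A ω = a}.indicator Ya | .comap X inferInstance] =ᵐ[P] (ν ∘ X) * (e ∘ X) := by
  set S := {ω | A ω = a}
  have hS : MeasurableSet S := hA (measurableSet_singleton a)
  have hνS : S.indicator (ν ∘ X) = (ν ∘ X) * S.indicator 1 := by
    ext ω; by_cases h : ω ∈ S <;> simp [h]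
  have h_exch : P[S.indicator Ya | .comap X inferInstance]
      =ᵐ[P] P[S.indicator (ν ∘ X) | .comap X inferInstance] :=
    condExp_comap_ae_eq_of_forall_setIntegral_preimage_eq hX (hYa.indicator hS)
      (hνX.indicator hS) fun B hB ↦ by
        simp only [setIntegral_indicator hS]; exact hexch B hB
  have h_ps : P[S.indicator 1 | .comap X inferInstance] =ᵐ[P] e ∘ X :=
    condExp_comap_ae_eq_comp_of_forall_setIntegral_preimage_eq hX
      ((integrable_const 1).indicator hS) he heX fun B hB ↦ by
        rw [setIntegral_indicator hS, Pi.one_def, setIntegral_const, hePS B hB, smul_eq_mul,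
          mul_one, measureReal_def]
  calc P[S.indicator Ya | .comap X inferInstance]
      =ᵐ[P] P[(ν ∘ X) * S.indicator 1 | .comap X inferInstance] := hνS ▸ h_exch
    _ =ᵐ[P] (ν ∘ X) * P[S.indicator 1 | .comap X inferInstance] :=
        condExp_mul_of_stronglyMeasurable_left (hν.comp (comap_measurable X)).stronglyMeasurable
          (hνS ▸ hνX.indicator hS) ((integrable_const 1).indicator hS)
    _ =ᵐ[P] (ν ∘ X) * (e ∘ X) := (Filter.EventuallyEq.refl _ _).mul h_ps

end Comap

theorem indicator_ae_eq_of_consistency {Ω : Type*} [MeasurableSpace Ω] {P : Measure Ω}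
    {A Y Y1 Y0 : Ω → ℝ} {a : ℝ} (ha : a = 0 ∨ a = 1)
    (hcons : ∀ᵐ ω ∂P, Y ω = A ω * Y1 ω + (1 - A ω) * Y0 ω) :
    {ω | A ω = a}.indicator Y =ᵐ[P] {ω | A ω = a}.indicator (if a = 1 then Y1 else Y0) := by
  filter_upwards [hcons] with ω hω
  by_cases hAa : A ω = a
  · rcases ha with rfl | rfl <;> simp [hAa, hω]
  · simp [hAa]

theorem indicator_inter_preimage_div_eq {Ω 𝒳 : Type*} (X : Ω → 𝒳) (w : Set 𝒳) (S : Set Ω)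
    (Y : Ω → ℝ) (e : 𝒳 → ℝ) (ω : Ω) :
    (X ⁻¹' w ∩ S).indicator (fun ω ↦ Y ω / e (X ω)) ω
      = w.indicator (fun x ↦ (e x)⁻¹) (X ω) * S.indicator Y ω := by
  by_cases hw : X ω ∈ w <;> by_cases hS : ω ∈ S <;> simp [hw, hS, div_eq_inv_mul]

theorem indicator_inv_mul_mul_cancel {𝒳 : Type*} {w : Set 𝒳} {e : 𝒳 → ℝ} (ν : 𝒳 → ℝ) {x : 𝒳}
    (hx : e x ≠ 0) : w.indicator (fun x ↦ (e x)⁻¹) x * (ν x * e x) = w.indicator ν x := by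
  by_cases hw : x ∈ w
  · rw [Set.indicator_of_mem hw, Set.indicator_of_mem hw]
    field_simp
  · simp [hw]

theorem norm_indicator_inv_le {𝒳 : Type*} {w : Set 𝒳} {e : 𝒳 → ℝ} {ε : ℝ} (hε : 0 < ε) {x : 𝒳}
    (hx : ε ≤ e x) : ‖w.indicator (fun x ↦ (e x)⁻¹) x‖ ≤ ε⁻¹ := by
  refine (norm_indicator_le_norm_self _ _).trans ?_
  rw [norm_inv, Real.norm_of_nonneg (hε.le.trans hx)]
  exact inv_anti₀ hε hx

theorem ipw_identification_general
    {Ω : Type*} [MeasurableSpace Ω] (P : Measure Ω) [IsProbabilityMeasure P]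
    {𝒳 : Type*} [MeasurableSpace 𝒳]
    (X : Ω → 𝒳) (hX : Measurable X)
    (A : Ω → ℝ) (hA : Measurable A)
    (Y : Ω → ℝ)
    (a : ℝ) (ha : a = 0 ∨ a = 1)
    (Y1 Y0 : Ω → ℝ)
    (hY1int : Integrable Y1 P) (hY0int : Integrable Y0 P)
    (Ya : Ω → ℝ) (hYa : Ya = if a = 1 then Y1 else Y0)
    -- consistency of potential outcomes
    (hcons : ∀ᵐ ω ∂P, Y ω = A ω * Y1 ω + (1 - A ω) * Y0 ω)
    -- a version of the propensity score
    (e : 𝒳 → ℝ) (he : Measurable e)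
    (hePS : ∀ B : Set 𝒳, MeasurableSet B →
      ∫ ω in X ⁻¹' B, e (X ω) ∂P = (P (X ⁻¹' B ∩ {ω | A ω = a})).toReal)
    -- a version of E[Y^a | X]
    (ν : 𝒳 → ℝ) (hν : Measurable ν)
    (hνint : Integrable (fun ω => ν (X ω)) P)
    (hνCE : ∀ B : Set 𝒳, MeasurableSet B →
      ∫ ω in X ⁻¹' B, Ya ω ∂P = ∫ ω in X ⁻¹' B, ν (X ω) ∂P)
    -- mean exchangeability
    (hexch : ∀ B : Set 𝒳, MeasurableSet B →
      ∫ ω in X ⁻¹' B ∩ {ω | A ω = a}, Ya ω ∂P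
        = ∫ ω in X ⁻¹' B ∩ {ω | A ω = a}, ν (X ω) ∂P)
    -- positivity
    (ε : ℝ) (hε : 0 < ε)
    (hpos : ∀ᵐ ω ∂P, ε ≤ e (X ω) ∧ e (X ω) ≤ 1 - ε)
    -- the subgroup
    (w : Set 𝒳) (hw : MeasurableSet w) :
    ∫ ω in X ⁻¹' w, Ya ω ∂P
      = ∫ ω, (X ⁻¹' w ∩ {ω' | A ω' = a}).indicator
          (fun ω' => Y ω' / e (X ω')) ω ∂P := by
  set S := {ω | A ω = a}
  set g := w.indicator fun x ↦ (e x)⁻¹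
  have hS : MeasurableSet S := hA (measurableSet_singleton a)
  have hYaint : Integrable Ya P := by rw [hYa]; split_ifs <;> assumption
  have he_pos : ∀ᵐ ω ∂P, 0 < e (X ω) := hpos.mono fun ω h ↦ hε.trans_le h.1
  have heX : Integrable (e ∘ X) P := .of_bound (he.comp hX).aestronglyMeasurable 1 <|
    hpos.mono fun ω h ↦ show |e (X ω)| ≤ 1 from abs_le.2 ⟨by linarith [h.1], by linarith [h.2]⟩
  calc ∫ ω in X ⁻¹' w, Ya ω ∂P
      = ∫ ω, g (X ω) * (ν (X ω) * e (X ω)) ∂P := by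
        rw [hνCE w hw, ← integral_indicator (hX hw)]
        refine integral_congr_ae ?_
        filter_upwards [he_pos] with ω h0
        exact (indicator_inv_mul_mul_cancel ν h0.ne').symm
    _ = ∫ ω, g (X ω) * P[S.indicator Ya | .comap X inferInstance] ω ∂P := by
        refine integral_congr_ae ?_
        filter_upwards [condExp_indicator_ae_eq_mul_propensity hX hA hYaint he heX hePS hν hνint
          hexch] with ω hω
        exact congrArg (g (X ω) * ·) hω.symm
    _ = ∫ ω, g (X ω) * S.indicator Ya ω ∂P :=
        integral_comp_mul_condExp_comap hX (he.inv.indicator hw)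
          (hpos.mono fun ω h ↦ norm_indicator_inv_le hε h.1) (hYaint.indicator hS)
    _ = ∫ ω, g (X ω) * S.indicator Y ω ∂P := by
        refine integral_congr_ae ?_
        filter_upwards [indicator_ae_eq_of_consistency ha hcons] with ω hω
        rw [hω, hYa]
    _ = _ := by simp only [indicator_inter_preimage_div_eq, g]

/-- Under consistency, mean exchangeability and positivity, the
subgroup-specific potential outcome mean admits the inverse probability weighting
representation: `∫_{X ∈ w} Y^a dP = ∫ 1{X ∈ w} 1{A = a} Y / e_a(X) dP`. -/
theorem ipw_identification
    {Ω : Type*} [MeasurableSpace Ω] (P : Measure Ω) [IsProbabilityMeasure P]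
    {𝒳 : Type*} [MeasurableSpace 𝒳]
    (X : Ω → 𝒳) (hX : Measurable X)
    (A : Ω → ℝ) (hA : Measurable A) (hA01 : ∀ ω, A ω = 0 ∨ A ω = 1)
    (Y : Ω → ℝ) (hY : Measurable Y) (hYint : Integrable Y P)
    (a : ℝ) (ha : a = 0 ∨ a = 1)
    (Y1 Y0 : Ω → ℝ) (hY1m : Measurable Y1) (hY0m : Measurable Y0)
    (hY1int : Integrable Y1 P) (hY0int : Integrable Y0 P)
    (Ya : Ω → ℝ) (hYa : Ya = if a = 1 then Y1 else Y0)
    -- consistency of potential outcomes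
    (hcons : ∀ᵐ ω ∂P, Y ω = A ω * Y1 ω + (1 - A ω) * Y0 ω)
    -- a version of the propensity score
    (e : 𝒳 → ℝ) (he : Measurable e)
    (hePS : ∀ B : Set 𝒳, MeasurableSet B →
      ∫ ω in X ⁻¹' B, e (X ω) ∂P = (P (X ⁻¹' B ∩ {ω | A ω = a})).toReal)
    -- a version of E[Y^a | X]
    (ν : 𝒳 → ℝ) (hν : Measurable ν)
    (hνint : Integrable (fun ω => ν (X ω)) P)
    (hνCE : ∀ B : Set 𝒳, MeasurableSet B →
      ∫ ω in X ⁻¹' B, Ya ω ∂P = ∫ ω in X ⁻¹' B, ν (X ω) ∂P)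
    -- mean exchangeability
    (hexch : ∀ B : Set 𝒳, MeasurableSet B →
      ∫ ω in X ⁻¹' B ∩ {ω | A ω = a}, Ya ω ∂P
        = ∫ ω in X ⁻¹' B ∩ {ω | A ω = a}, ν (X ω) ∂P)
    -- positivity
    (ε : ℝ) (hε : 0 < ε)
    (hpos : ∀ᵐ ω ∂P, ε ≤ e (X ω) ∧ e (X ω) ≤ 1 - ε)
    -- the subgroup
    (w : Set 𝒳) (hw : MeasurableSet w)
    (hwpos : 0 < (P (X ⁻¹' w)).toReal) :
    ∫ ω in X ⁻¹' w, Ya ω ∂P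
      = ∫ ω, (X ⁻¹' w ∩ {ω' | A ω' = a}).indicator
          (fun ω' => Y ω' / e (X ω')) ω ∂P :=
  ipw_identification_general P X hX A hA Y a ha Y1 Y0 hY1int hY0int Ya hYa hcons e he hePS ν hν
    hνint hνCE hexch ε hε hpos w hw
end

section
/- Under consistency, mean exchangeability and positivity, any version m_a of the outcome regression E[Y | X, A = a] coincides almost surely with any version ν_a of the conditional potential outcome mean E[Y^a | X]: m_a(X) = ν_a(X) P-almost surely. -/
/-!
On the treated set `S = {A = a}` consistency gives `Y = Y^a`, so the defining identities of `m_a`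
and mean exchangeability say that `g = m_a - ν_a` integrates to zero against the law of `X`
restricted to `S` over every measurable set, i.e. `g = 0` almost surely for that law. The
propensity-score identity says that this law has density `e_a` with respect to the law of `X`, and
positivity makes the density nonvanishing, so `g = 0` almost surely for the law of `X` itself.
-/

open MeasureTheory

section WithDensity

variable {α : Type*} [MeasurableSpace α] {μ ρ : Measure α}

theorem withDensity_ofReal_eq_of_forall_setIntegral_eq [IsFiniteMeasure ρ] {f : α → ℝ}
    (hf : Integrable f μ) (hf0 : 0 ≤ᵐ[μ] f)
    (h : ∀ s, MeasurableSet s → ∫ x in s, f x ∂μ = (ρ s).toReal) :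
    μ.withDensity (fun x => ENNReal.ofReal (f x)) = ρ := by
  ext s hs
  rw [withDensity_apply _ hs, ← ofReal_integral_eq_lintegral_ofReal hf.integrableOn
    (ae_restrict_of_ae hf0), h s hs, ENNReal.ofReal_toReal (measure_ne_top ρ s)]

theorem ae_eq_zero_of_forall_setIntegral_withDensity_eq_zero {f : α → ENNReal}
    (hf : AEMeasurable f μ) (hf0 : ∀ᵐ x ∂μ, f x ≠ 0) {g : α → ℝ}
    (hg : Integrable g (μ.withDensity f))
    (h : ∀ s, MeasurableSet s → ∫ x in s, g x ∂μ.withDensity f = 0) :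
    g =ᵐ[μ] 0 :=
  withDensity_absolutelyContinuous' hf hf0 <|
    hg.ae_eq_zero_of_forall_setIntegral_eq_zero fun s hs _ => h s hs

end WithDensity

section Restrict

variable {Ω α : Type*} [MeasurableSpace Ω] [MeasurableSpace α] {P : Measure Ω} {X : Ω → α}
  {S : Set Ω}

theorem setIntegral_map_restrict (hX : Measurable X) {s : Set α} (hs : MeasurableSet s)
    {g : α → ℝ} (hg : Measurable g) :
    ∫ x in s, g x ∂(P.restrict S).map X = ∫ ω in X ⁻¹' s ∩ S, g (X ω) ∂P := by
  rw [setIntegral_map hs hg.aestronglyMeasurable hX.aemeasurable,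
    Measure.restrict_restrict (hX hs)]

theorem map_restrict_eq_withDensity_of_forall_setIntegral_eq [IsFiniteMeasure P]
    (hX : Measurable X) {e : α → ℝ} (he : Measurable e)
    (he_int : Integrable (fun ω => e (X ω)) P) (he_nonneg : ∀ᵐ ω ∂P, 0 ≤ e (X ω))
    (he_eq : ∀ s, MeasurableSet s →
      ∫ ω in X ⁻¹' s, e (X ω) ∂P = (P (X ⁻¹' s ∩ S)).toReal) :
    (P.map X).withDensity (fun x => ENNReal.ofReal (e x)) = (P.restrict S).map X := by
  refine withDensity_ofReal_eq_of_forall_setIntegral_eq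
    ((integrable_map_measure he.aestronglyMeasurable hX.aemeasurable).2 he_int)
    ((ae_map_iff hX.aemeasurable (measurableSet_le measurable_const he)).2 he_nonneg)
    fun s hs => ?_
  rw [setIntegral_map hs he.aestronglyMeasurable hX.aemeasurable, he_eq s hs,
    Measure.map_apply hX hs, Measure.restrict_apply (hX hs)]

end Restrict

theorem ae_eq_potentialOutcome_of_treatment_eq {Ω : Type*} [MeasurableSpace Ω] {P : Measure Ω}
    {A Y Y1 Y0 : Ω → ℝ} {a : ℝ} (ha : a = 0 ∨ a = 1)
    (hcons : ∀ᵐ ω ∂P, Y ω = A ω * Y1 ω + (1 - A ω) * Y0 ω) :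
    ∀ᵐ ω ∂P, A ω = a → Y ω = (if a = 1 then Y1 else Y0) ω := by
  filter_upwards [hcons] with ω hω hAω
  rcases ha with rfl | rfl <;> simp [hω, hAω]

theorem outcome_regression_eq_conditional_potential_outcome_general
    {Ω : Type*} [MeasurableSpace Ω] (P : Measure Ω) [IsProbabilityMeasure P]
    {𝒳 : Type*} [MeasurableSpace 𝒳]
    (X : Ω → 𝒳) (hX : Measurable X)
    (A : Ω → ℝ) (hA : Measurable A)
    (Y : Ω → ℝ)
    (a : ℝ) (ha : a = 0 ∨ a = 1)
    (Y1 Y0 : Ω → ℝ)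
    (Ya : Ω → ℝ) (hYa : Ya = if a = 1 then Y1 else Y0)
    -- consistency of potential outcomes
    (hcons : ∀ᵐ ω ∂P, Y ω = A ω * Y1 ω + (1 - A ω) * Y0 ω)
    -- a version of the propensity score
    (e : 𝒳 → ℝ) (he : Measurable e)
    (hePS : ∀ B : Set 𝒳, MeasurableSet B →
      ∫ ω in X ⁻¹' B, e (X ω) ∂P = (P (X ⁻¹' B ∩ {ω | A ω = a})).toReal)
    -- a version of the outcome regression E[Y | X, A = a]
    (m : 𝒳 → ℝ) (hm : Measurable m)
    (hmint : Integrable (fun ω => m (X ω)) P)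
    (hmOR : ∀ B : Set 𝒳, MeasurableSet B →
      ∫ ω in X ⁻¹' B ∩ {ω | A ω = a}, Y ω ∂P
        = ∫ ω in X ⁻¹' B ∩ {ω | A ω = a}, m (X ω) ∂P)
    -- a version of E[Y^a | X]
    (ν : 𝒳 → ℝ) (hν : Measurable ν)
    (hνint : Integrable (fun ω => ν (X ω)) P)
    -- mean exchangeability
    (hexch : ∀ B : Set 𝒳, MeasurableSet B →
      ∫ ω in X ⁻¹' B ∩ {ω | A ω = a}, Ya ω ∂P
        = ∫ ω in X ⁻¹' B ∩ {ω | A ω = a}, ν (X ω) ∂P)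
    -- positivity
    (ε : ℝ) (hε : 0 < ε)
    (hpos : ∀ᵐ ω ∂P, ε ≤ e (X ω) ∧ e (X ω) ≤ 1 - ε) :
    ∀ᵐ ω ∂P, m (X ω) = ν (X ω) := by
  set S := {ω | A ω = a}
  have hS : MeasurableSet S := hA (measurableSet_singleton a)
  have hlaw : (P.map X).withDensity (fun x => ENNReal.ofReal (e x)) = (P.restrict S).map X :=
    map_restrict_eq_withDensity_of_forall_setIntegral_eq hX he
      (Integrable.of_bound (he.comp hX).aestronglyMeasurable 1 <| hpos.mono fun ω hω => by
        rw [Real.norm_eq_abs, abs_le]; constructor <;> linarith [hω.1, hω.2])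
      (hpos.mono fun ω hω => hε.le.trans hω.1) hePS
  have he_pos : ∀ᵐ x ∂P.map X, ENNReal.ofReal (e x) ≠ 0 :=
    (ae_map_iff hX.aemeasurable (measurableSet_lt measurable_const he)).2
      (hpos.mono fun ω hω => hε.trans_le hω.1) |>.mono fun x hx => by simpa using hx
  have hY_eq : ∀ᵐ ω ∂P, ω ∈ S → Y ω = Ya ω :=
    hYa ▸ ae_eq_potentialOutcome_of_treatment_eq ha hcons
  have hzero : ∀ B, MeasurableSet B → ∫ x in B, m x - ν x ∂(P.restrict S).map X = 0 := by
    intro B hB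
    have hYYa : ∫ ω in X ⁻¹' B ∩ S, Y ω ∂P = ∫ ω in X ⁻¹' B ∩ S, Ya ω ∂P :=
      setIntegral_congr_ae ((hX hB).inter hS) (hY_eq.mono fun ω h hω => h hω.2)
    rw [setIntegral_map_restrict (g := fun x => m x - ν x) hX hB (hm.sub hν),
      integral_sub hmint.integrableOn hνint.integrableOn, ← hmOR B hB, hYYa, hexch B hB,
      sub_self]
  have hg_int : Integrable (fun x => m x - ν x) ((P.restrict S).map X) :=
    (integrable_map_measure (hm.sub hν).aestronglyMeasurable hX.aemeasurable).2
      (hmint.sub hνint).restrict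
  have hg : ∀ᵐ x ∂P.map X, m x = ν x :=
    (ae_eq_zero_of_forall_setIntegral_withDensity_eq_zero (by fun_prop) he_pos (hlaw ▸ hg_int)
      (hlaw ▸ hzero)).mono fun x hx => sub_eq_zero.1 hx
  exact ae_of_ae_map hX.aemeasurable hg

/-- Under consistency, mean exchangeability and positivity, any version
`m_a` of the outcome regression `E[Y | X, A = a]` coincides `P`-almost surely with any
version `ν_a` of the conditional potential outcome mean `E[Y^a | X]`. -/
theorem outcome_regression_eq_conditional_potential_outcome
    {Ω : Type*} [MeasurableSpace Ω] (P : Measure Ω) [IsProbabilityMeasure P]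
    {𝒳 : Type*} [MeasurableSpace 𝒳]
    (X : Ω → 𝒳) (hX : Measurable X)
    (A : Ω → ℝ) (hA : Measurable A) (hA01 : ∀ ω, A ω = 0 ∨ A ω = 1)
    (Y : Ω → ℝ) (hY : Measurable Y) (hYint : Integrable Y P)
    (a : ℝ) (ha : a = 0 ∨ a = 1)
    (Y1 Y0 : Ω → ℝ) (hY1m : Measurable Y1) (hY0m : Measurable Y0)
    (hY1int : Integrable Y1 P) (hY0int : Integrable Y0 P)
    (Ya : Ω → ℝ) (hYa : Ya = if a = 1 then Y1 else Y0)
    -- consistency of potential outcomes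
    (hcons : ∀ᵐ ω ∂P, Y ω = A ω * Y1 ω + (1 - A ω) * Y0 ω)
    -- a version of the propensity score
    (e : 𝒳 → ℝ) (he : Measurable e)
    (hePS : ∀ B : Set 𝒳, MeasurableSet B →
      ∫ ω in X ⁻¹' B, e (X ω) ∂P = (P (X ⁻¹' B ∩ {ω | A ω = a})).toReal)
    -- a version of the outcome regression E[Y | X, A = a]
    (m : 𝒳 → ℝ) (hm : Measurable m)
    (hmint : Integrable (fun ω => m (X ω)) P)
    (hmOR : ∀ B : Set 𝒳, MeasurableSet B →
      ∫ ω in X ⁻¹' B ∩ {ω | A ω = a}, Y ω ∂P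
        = ∫ ω in X ⁻¹' B ∩ {ω | A ω = a}, m (X ω) ∂P)
    -- a version of E[Y^a | X]
    (ν : 𝒳 → ℝ) (hν : Measurable ν)
    (hνint : Integrable (fun ω => ν (X ω)) P)
    (hνCE : ∀ B : Set 𝒳, MeasurableSet B →
      ∫ ω in X ⁻¹' B, Ya ω ∂P = ∫ ω in X ⁻¹' B, ν (X ω) ∂P)
    -- mean exchangeability
    (hexch : ∀ B : Set 𝒳, MeasurableSet B →
      ∫ ω in X ⁻¹' B ∩ {ω | A ω = a}, Ya ω ∂P
        = ∫ ω in X ⁻¹' B ∩ {ω | A ω = a}, ν (X ω) ∂P)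
    -- positivity
    (ε : ℝ) (hε : 0 < ε)
    (hpos : ∀ᵐ ω ∂P, ε ≤ e (X ω) ∧ e (X ω) ≤ 1 - ε) :
    ∀ᵐ ω ∂P, m (X ω) = ν (X ω) :=
  outcome_regression_eq_conditional_potential_outcome_general P X hX A hA Y a ha Y1 Y0 Ya hYa hcons
    e he hePS m hm hmint hmOR ν hν hνint hexch ε hε hpos
end

section
/- The inverse probability weighting functional and the g-formula functional agree on the observed data: for every measurable subgroup w ⊆ 𝒳, ∫_Ω 1{X ∈ w} · 1{A = a} · Y / e_a(X) dP = ∫_{{X ∈ w}} m_a(X) dP, where e_a is a version of the propensity score satisfying e_a(X) ≥ ε almost surely for some ε > 0 and m_a is a version of the outcome regression E[Y | X, A = a]. -/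
/-!
Both functionals are integrals against functions of `X`, so they can be compared through
conditional expectations given `σ(X)`. The defining property of `m_a` says that `1{A = a} Y` and
`1{A = a} m_a(X)` have the same conditional expectation given `X`, and that of `e_a` says that
`e_a(X)` is the conditional expectation of `1{A = a}`. Pulling out the `σ(X)`-measurable weight
`1{X ∈ w} / e_a(X)`, which is bounded by `1 / ε`, turns the IPW integral first into
`∫_{A = a} 1{X ∈ w} m_a(X) / e_a(X)` and then into `∫ 1{X ∈ w} m_a(X) e_a(X) / e_a(X)`.
-/

open MeasureTheory

theorem integrable_of_setIntegral_sublevel_le {Ω : Type*} [MeasurableSpace Ω] {μ : Measure Ω}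
    [IsFiniteMeasure μ] {f : Ω → ℝ} (hf : Measurable f) (hf_nonneg : 0 ≤ᵐ[μ] f) {C : ℝ}
    (hC : ∀ n : ℕ, ∫ x in {x | f x ≤ n}, f x ∂μ ≤ C) : Integrable f μ := by
  have hunion : ⋃ n : ℕ, {x | f x ≤ n} = Set.univ :=
    Set.eq_univ_of_forall fun x => Set.mem_iUnion.2 (exists_nat_ge (f x))
  have hmono : Monotone fun n : ℕ => {x | f x ≤ n} :=
    fun i j hij x (hx : f x ≤ i) => hx.trans (Nat.cast_le.2 hij)
  have hlevel (n : ℕ) : ∫⁻ x in {x | f x ≤ n}, ENNReal.ofReal (f x) ∂μ ≤ ENNReal.ofReal C := by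
    have hint : IntegrableOn f {x | f x ≤ n} μ := by
      refine Measure.integrableOn_of_bounded (measure_ne_top μ _) hf.aestronglyMeasurable
        (M := n) ?_
      filter_upwards [ae_restrict_mem (measurableSet_le hf measurable_const),
        ae_restrict_of_ae hf_nonneg] with x hxn hx0
      rwa [Real.norm_of_nonneg hx0]
    rw [← ofReal_integral_eq_lintegral_ofReal hint (ae_restrict_of_ae hf_nonneg)]
    exact ENNReal.ofReal_le_ofReal (hC n)
  refine ⟨hf.aestronglyMeasurable, (hasFiniteIntegral_iff_ofReal hf_nonneg).2 ?_⟩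
  calc ∫⁻ x, ENNReal.ofReal (f x) ∂μ
      = ⨆ n : ℕ, ∫⁻ x in {x | f x ≤ n}, ENNReal.ofReal (f x) ∂μ := by
        rw [← setLIntegral_iUnion_of_directed _ hmono.directed_le, hunion, Measure.restrict_univ]
    _ ≤ ENNReal.ofReal C := iSup_le hlevel
    _ < ⊤ := ENNReal.ofReal_lt_top

theorem integral_mul_eq_of_forall_setIntegral_eq {Ω : Type*} {m m₀ : MeasurableSpace Ω}
    {μ : Measure Ω} (hm : m ≤ m₀) [SigmaFinite (μ.trim hm)] {f g h : Ω → ℝ}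
    (hf : Integrable f μ) (hg : Integrable g μ)
    (hfg : ∀ s, MeasurableSet[m] s → μ s < ⊤ → ∫ x in s, f x ∂μ = ∫ x in s, g x ∂μ)
    (hh : StronglyMeasurable[m] h) (hhf : Integrable (h * f) μ) (hhg : Integrable (h * g) μ) :
    ∫ x, h x * f x ∂μ = ∫ x, h x * g x ∂μ := by
  have hcond : μ[f | m] =ᵐ[μ] μ[g | m] :=
    ae_eq_condExp_of_forall_setIntegral_eq hm hg (fun _ _ _ => integrable_condExp.integrableOn)
      (fun s hs hμs => by rw [setIntegral_condExp hm hf hs, hfg s hs hμs])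
      stronglyMeasurable_condExp.aestronglyMeasurable
  calc ∫ x, h x * f x ∂μ
      = ∫ x, (μ[h * f | m]) x ∂μ := (integral_condExp hm).symm
    _ = ∫ x, (h * μ[f | m]) x ∂μ :=
        integral_congr_ae (condExp_mul_of_stronglyMeasurable_left hh hhf hf)
    _ = ∫ x, (h * μ[g | m]) x ∂μ := integral_congr_ae hcond.mul_left
    _ = ∫ x, (μ[h * g | m]) x ∂μ :=
        (integral_congr_ae (condExp_mul_of_stronglyMeasurable_left hh hhg hg)).symm
    _ = ∫ x, h x * g x ∂μ := integral_condExp hm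

section Observational

variable {Ω 𝒳 : Type*} [MeasurableSpace Ω] [MeasurableSpace 𝒳] {μ : Measure Ω}
  [IsFiniteMeasure μ] {X : Ω → 𝒳} {S : Set Ω}

theorem integral_comp_mul_eq_of_forall_setIntegral_preimage_eq (hX : Measurable X)
    {f g : Ω → ℝ} (hf : Integrable f μ) (hg : Integrable g μ)
    (hfg : ∀ B, MeasurableSet B → ∫ ω in X ⁻¹' B, f ω ∂μ = ∫ ω in X ⁻¹' B, g ω ∂μ)
    {h : 𝒳 → ℝ} (hh : Measurable h) (hhf : Integrable (fun ω => h (X ω) * f ω) μ)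
    (hhg : Integrable (fun ω => h (X ω) * g ω) μ) :
    ∫ ω, h (X ω) * f ω ∂μ = ∫ ω, h (X ω) * g ω ∂μ :=
  integral_mul_eq_of_forall_setIntegral_eq hX.comap_le hf hg
    (by rintro _ ⟨B, hB, rfl⟩ _; exact hfg B hB)
    (hh.comp (Measurable.of_comap_le le_rfl)).stronglyMeasurable hhf hhg

variable (μ X S) in
/-- `e ∘ X` is a version of `P(S | X)`. -/
def IsPropensityScore (e : 𝒳 → ℝ) : Prop :=
  ∀ B, MeasurableSet B → ∫ ω in X ⁻¹' B, e (X ω) ∂μ = (μ (X ⁻¹' B ∩ S)).toReal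

variable (μ X S) in
/-- `m ∘ X` is a version of `E[Y | X, S]`. -/
def IsOutcomeRegression (Y : Ω → ℝ) (m : 𝒳 → ℝ) : Prop :=
  ∀ B, MeasurableSet B → ∫ ω in X ⁻¹' B ∩ S, Y ω ∂μ = ∫ ω in X ⁻¹' B ∩ S, m (X ω) ∂μ

theorem IsPropensityScore.integrable {e : 𝒳 → ℝ} (hPS : IsPropensityScore μ X S e)
    (hX : Measurable X) (he : Measurable e) (he_nonneg : ∀ᵐ ω ∂μ, 0 ≤ e (X ω)) :
    Integrable (fun ω => e (X ω)) μ :=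
  integrable_of_setIntegral_sublevel_le (he.comp hX) he_nonneg (C := μ.real Set.univ) fun n =>
    (hPS (e ⁻¹' Set.Iic n) (he measurableSet_Iic)).trans_le
      (measureReal_mono (Set.subset_univ _))

theorem IsPropensityScore.setIntegral_comp {e : 𝒳 → ℝ} (hPS : IsPropensityScore μ X S e)
    (hX : Measurable X) (hS : MeasurableSet S) (heX : Integrable (fun ω => e (X ω)) μ)
    {h : 𝒳 → ℝ} (hh : Measurable h) (hhX : Integrable (fun ω => h (X ω)) μ)
    (hhe : Integrable (fun ω => h (X ω) * e (X ω)) μ) :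
    ∫ ω in S, h (X ω) ∂μ = ∫ ω, h (X ω) * e (X ω) ∂μ := by
  have hind : S.indicator (fun ω => h (X ω)) = fun ω => h (X ω) * S.indicator 1 ω := by
    ext ω
    by_cases hωS : ω ∈ S <;> simp [hωS]
  rw [← integral_indicator hS, hind]
  refine integral_comp_mul_eq_of_forall_setIntegral_preimage_eq hX
    ((integrable_const 1).indicator hS) heX (fun B hB => ?_) hh (hind ▸ hhX.indicator hS) hhe
  rw [setIntegral_indicator hS, hPS B hB]
  simp [measureReal_def]

theorem IsOutcomeRegression.setIntegral_comp_mul {Y : Ω → ℝ} {m : 𝒳 → ℝ}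
    (hOR : IsOutcomeRegression μ X S Y m) (hX : Measurable X) (hS : MeasurableSet S)
    (hY : Integrable Y μ) (hmX : Integrable (fun ω => m (X ω)) μ) {h : 𝒳 → ℝ}
    (hh : Measurable h) {C : ℝ} (hhC : ∀ᵐ ω ∂μ, ‖h (X ω)‖ ≤ C) :
    ∫ ω in S, h (X ω) * Y ω ∂μ = ∫ ω in S, h (X ω) * m (X ω) ∂μ := by
  simp only [← integral_indicator hS, Set.indicator_mul_right]
  refine integral_comp_mul_eq_of_forall_setIntegral_preimage_eq hX (hY.indicator hS)
    (hmX.indicator hS) (fun B hB => ?_) hh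
    ((hY.indicator hS).bdd_mul (hh.comp hX).aestronglyMeasurable hhC)
    ((hmX.indicator hS).bdd_mul (hh.comp hX).aestronglyMeasurable hhC)
  rw [setIntegral_indicator hS, setIntegral_indicator hS]
  exact hOR B hB

end Observational

theorem ipw_eq_gformula_general
    {Ω : Type*} [MeasurableSpace Ω] (P : Measure Ω) [IsProbabilityMeasure P]
    {𝒳 : Type*} [MeasurableSpace 𝒳]
    (X : Ω → 𝒳) (hX : Measurable X)
    (A : Ω → ℝ) (hA : Measurable A)
    (Y : Ω → ℝ) (hYint : Integrable Y P)
    (a : ℝ)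
    -- a version of the propensity score, bounded below by ε > 0 a.s.
    (e : 𝒳 → ℝ) (he : Measurable e)
    (hePS : ∀ B : Set 𝒳, MeasurableSet B →
      ∫ ω in X ⁻¹' B, e (X ω) ∂P = (P (X ⁻¹' B ∩ {ω | A ω = a})).toReal)
    (ε : ℝ) (hε : 0 < ε) (hpos : ∀ᵐ ω ∂P, ε ≤ e (X ω))
    -- a version of the outcome regression E[Y | X, A = a]
    (m : 𝒳 → ℝ) (hm : Measurable m)
    (hmint : Integrable (fun ω => m (X ω)) P)
    (hmOR : ∀ B : Set 𝒳, MeasurableSet B →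
      ∫ ω in X ⁻¹' B ∩ {ω | A ω = a}, Y ω ∂P
        = ∫ ω in X ⁻¹' B ∩ {ω | A ω = a}, m (X ω) ∂P)
    -- the subgroup
    (w : Set 𝒳) (hw : MeasurableSet w) :
    ∫ ω, (X ⁻¹' w ∩ {ω' | A ω' = a}).indicator (fun ω' => Y ω' / e (X ω')) ω ∂P
      = ∫ ω in X ⁻¹' w, m (X ω) ∂P := by
  set S := {ω | A ω = a}
  have hS : MeasurableSet S := hA (measurableSet_singleton a)
  set r : 𝒳 → ℝ := w.indicator fun x => (e x)⁻¹
  have hr : Measurable r := he.inv.indicator hw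
  have hr_bound : ∀ᵐ ω ∂P, ‖r (X ω)‖ ≤ ε⁻¹ := by
    filter_upwards [hpos] with ω hω
    by_cases hXw : X ω ∈ w
    · simpa [r, hXw, abs_of_pos (hε.trans_le hω)] using inv_anti₀ hε hω
    · simpa [r, hXw] using hε.le
  have hcancel : (fun ω => r (X ω) * m (X ω) * e (X ω))
      =ᵐ[P] (X ⁻¹' w).indicator (fun ω => m (X ω)) := by
    filter_upwards [hpos] with ω hω
    have he_ne : e (X ω) ≠ 0 := (hε.trans_le hω).ne'
    by_cases hXw : X ω ∈ w <;> simp [r, hXw, mul_right_comm _ (m (X ω)), he_ne]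
  calc ∫ ω, (X ⁻¹' w ∩ S).indicator (fun ω' => Y ω' / e (X ω')) ω ∂P
      = ∫ ω in S, r (X ω) * Y ω ∂P := by
        rw [← integral_indicator hS]
        congr 1 with ω
        by_cases hXw : X ω ∈ w <;> by_cases hωS : ω ∈ S <;> simp [r, hXw, hωS, div_eq_inv_mul]
    _ = ∫ ω in S, r (X ω) * m (X ω) ∂P :=
        IsOutcomeRegression.setIntegral_comp_mul hmOR hX hS hYint hmint hr hr_bound
    _ = ∫ ω, r (X ω) * m (X ω) * e (X ω) ∂P :=
        IsPropensityScore.setIntegral_comp hePS hX hS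
          (IsPropensityScore.integrable hePS hX he (hpos.mono fun _ hω => hε.le.trans hω))
          (hr.mul hm) (hmint.bdd_mul (hr.comp hX).aestronglyMeasurable hr_bound)
          ((hmint.indicator (hX hw)).congr hcancel.symm)
    _ = ∫ ω, (X ⁻¹' w).indicator (fun ω' => m (X ω')) ω ∂P := integral_congr_ae hcancel
    _ = ∫ ω in X ⁻¹' w, m (X ω) ∂P := integral_indicator (hX hw)

/-- The inverse probability weighting functional and the g-formula
functional agree on the observed data: for every measurable subgroup `w ⊆ 𝒳`,
`∫ 1{X ∈ w} 1{A = a} Y / e_a(X) dP = ∫_{X ∈ w} m_a(X) dP`. -/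
theorem ipw_eq_gformula
    {Ω : Type*} [MeasurableSpace Ω] (P : Measure Ω) [IsProbabilityMeasure P]
    {𝒳 : Type*} [MeasurableSpace 𝒳]
    (X : Ω → 𝒳) (hX : Measurable X)
    (A : Ω → ℝ) (hA : Measurable A) (hA01 : ∀ ω, A ω = 0 ∨ A ω = 1)
    (Y : Ω → ℝ) (hY : Measurable Y) (hYint : Integrable Y P)
    (a : ℝ) (ha : a = 0 ∨ a = 1)
    -- a version of the propensity score, bounded below by ε > 0 a.s.
    (e : 𝒳 → ℝ) (he : Measurable e)
    (hePS : ∀ B : Set 𝒳, MeasurableSet B →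
      ∫ ω in X ⁻¹' B, e (X ω) ∂P = (P (X ⁻¹' B ∩ {ω | A ω = a})).toReal)
    (ε : ℝ) (hε : 0 < ε) (hpos : ∀ᵐ ω ∂P, ε ≤ e (X ω))
    -- a version of the outcome regression E[Y | X, A = a]
    (m : 𝒳 → ℝ) (hm : Measurable m)
    (hmint : Integrable (fun ω => m (X ω)) P)
    (hmOR : ∀ B : Set 𝒳, MeasurableSet B →
      ∫ ω in X ⁻¹' B ∩ {ω | A ω = a}, Y ω ∂P
        = ∫ ω in X ⁻¹' B ∩ {ω | A ω = a}, m (X ω) ∂P)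
    -- the subgroup
    (w : Set 𝒳) (hw : MeasurableSet w) :
    ∫ ω, (X ⁻¹' w ∩ {ω' | A ω' = a}).indicator (fun ω' => Y ω' / e (X ω')) ω ∂P
      = ∫ ω in X ⁻¹' w, m (X ω) ∂P :=
  ipw_eq_gformula_general P X hX A hA Y hYint a e he hePS ε hε hpos m hm hmint hmOR w hw
end

section
/- Product bias bound for the doubly robust functional (Cauchy–Schwarz step in the rate-of-convergence proof): under the bias-decomposition hypotheses, for every measurable subgroup w ⊆ 𝒳, | E[ 1{X ∈ w} · ( g(X) + 1{A = a} · (Y − g(X)) / e*(X) ) ] − ∫_{{X ∈ w}} m_a(X) dP | ≤ ε⁻¹ · ‖ (e_a − e*) ∘ X ‖_{L²(P)} · ‖ (m_a − g) ∘ X ‖_{L²(P)}. -/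
/-!
Write `c = 1_w / e*`, so that `|c| ≤ ε⁻¹`. Pointwise, the doubly robust integrand equals
`1_w m_a(X) + c(X)(e_a − e*)(X)(m_a − g)(X) + c(X) 1{A = a}(Y − m_a(X))
  + c(X)(m_a − g)(X)(1{A = a} − e_a(X))`.
The last two terms are functions of `X` times residuals whose integrals over every `{X ∈ B}`
vanish (these are the defining properties of `m_a` and `e_a`); such a residual has conditional
expectation zero given `X`, and functions of `X` pull out of it, so both terms have mean zero.
The bias is therefore `E[c(X)(e_a − e*)(X)(m_a − g)(X)]`, and Cauchy–Schwarz with `|c| ≤ ε⁻¹`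
bounds it.
-/
open MeasureTheory

section

variable {Ω 𝒳 : Type*} [mΩ : MeasurableSpace Ω] [m𝒳 : MeasurableSpace 𝒳] {μ : Measure Ω}
  [IsFiniteMeasure μ] {X : Ω → 𝒳}

theorem integral_comp_mul_eq_zero_of_forall_setIntegral_preimage_eq_zero (hX : Measurable X)
    {f : Ω → ℝ} (hf : Integrable f μ)
    (hf0 : ∀ B, MeasurableSet B → ∫ ω in X ⁻¹' B, f ω ∂μ = 0)
    {h : 𝒳 → ℝ} (hh : Measurable h) (hhf : Integrable (fun ω => h (X ω) * f ω) μ) :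
    ∫ ω, h (X ω) * f ω ∂μ = 0 := by
  have hle : m𝒳.comap X ≤ mΩ := hX.comap_le
  have hcond : μ[f | m𝒳.comap X] =ᵐ[μ] 0 := by
    refine (ae_eq_condExp_of_forall_setIntegral_eq hle hf (fun _ _ _ => integrableOn_zero)
      ?_ aestronglyMeasurable_zero).symm
    rintro _ ⟨B, hB, rfl⟩ -
    simp [hf0 B hB]
  have hpull : μ[(h ∘ X) * f | m𝒳.comap X] =ᵐ[μ] (h ∘ X) * μ[f | m𝒳.comap X] :=
    condExp_mul_of_stronglyMeasurable_left
      (hh.comp (comap_measurable X)).stronglyMeasurable hhf hf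
  calc ∫ ω, h (X ω) * f ω ∂μ = ∫ ω, μ[(h ∘ X) * f | m𝒳.comap X] ω ∂μ :=
        (integral_condExp hle).symm
    _ = ∫ ω, (0 : Ω → ℝ) ω ∂μ :=
        integral_congr_ae (hpull.trans (hcond.mono fun ω hω => by simp [hω]))
    _ = 0 := integral_zero _ _

end

theorem abs_integral_mul_le_eLpNorm_mul_eLpNorm {α : Type*} [MeasurableSpace α] {μ : Measure α}
    {u v : α → ℝ} (hu : MemLp u 2 μ) (hv : MemLp v 2 μ) :
    |∫ x, u x * v x ∂μ| ≤ (eLpNorm u 2 μ).toReal * (eLpNorm v 2 μ).toReal := by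
  have hinner : ∫ x, u x * v x ∂μ = inner ℝ (hu.toLp u) (hv.toLp v) := by
    rw [L2.inner_def]
    refine integral_congr_ae ?_
    filter_upwards [hu.coeFn_toLp, hv.coeFn_toLp] with x hux hvx
    simp [hux, hvx, mul_comm]
  rw [hinner, ← Lp.norm_toLp u hu, ← Lp.norm_toLp v hv]
  exact abs_real_inner_le_norm _ _

theorem abs_integral_mul_mul_le_of_abs_le {α : Type*} [MeasurableSpace α] {μ : Measure α}
    {c u v : α → ℝ} {C : ℝ} (hC : 0 ≤ C) (hc : AEStronglyMeasurable c μ)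
    (hcC : ∀ᵐ x ∂μ, |c x| ≤ C) (hu : MemLp u 2 μ) (hv : MemLp v 2 μ) :
    |∫ x, c x * u x * v x ∂μ| ≤ C * (eLpNorm u 2 μ).toReal * (eLpNorm v 2 μ).toReal := by
  have hbound : ∀ᵐ x ∂μ, ‖c x * u x‖ ≤ C * ‖u x‖ := by
    filter_upwards [hcC] with x hx
    rw [norm_mul, Real.norm_eq_abs]
    exact mul_le_mul_of_nonneg_right hx (norm_nonneg _)
  have hcu : MemLp (fun x => c x * u x) 2 μ :=
    (hu.const_mul C).of_le (hc.mul hu.1)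
      (hbound.mono fun x hx => by rwa [norm_mul C, Real.norm_of_nonneg hC])
  have hnorm : (eLpNorm (fun x => c x * u x) 2 μ).toReal ≤ C * (eLpNorm u 2 μ).toReal := by
    rw [← ENNReal.toReal_ofReal hC, ← ENNReal.toReal_mul]
    exact ENNReal.toReal_mono (ENNReal.mul_ne_top ENNReal.ofReal_ne_top hu.eLpNorm_ne_top)
      (eLpNorm_le_mul_eLpNorm_of_ae_le_mul hbound 2)
  calc |∫ x, c x * u x * v x ∂μ|
      ≤ (eLpNorm (fun x => c x * u x) 2 μ).toReal * (eLpNorm v 2 μ).toReal :=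
        abs_integral_mul_le_eLpNorm_mul_eLpNorm hcu hv
    _ ≤ C * (eLpNorm u 2 μ).toReal * (eLpNorm v 2 μ).toReal :=
        mul_le_mul_of_nonneg_right hnorm ENNReal.toReal_nonneg

theorem abs_indicator_one_sub_le_one {α : Type*} {S : Set α} {a : α} {t : ℝ} (h0 : 0 ≤ t)
    (h1 : t ≤ 1) : |S.indicator 1 a - t| ≤ 1 := by
  by_cases ha : a ∈ S <;> simp [ha, abs_le] <;> constructor <;> linarith

theorem abs_indicator_inv_le_inv {α : Type*} {s : Set α} {f : α → ℝ} {ε : ℝ} (hε : 0 < ε)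
    (hf : ∀ x, ε ≤ f x) (x : α) : |s.indicator (fun x => (f x)⁻¹) x| ≤ ε⁻¹ := by
  by_cases hx : x ∈ s
  · rw [Set.indicator_of_mem hx, abs_inv]
    exact inv_anti₀ hε ((hf x).trans (le_abs_self _))
  · simp [hx, hε.le]

section DoublyRobust

variable {Ω 𝒳 : Type*} {X : Ω → 𝒳} {S : Set Ω}

noncomputable def drIntegrand (X : Ω → 𝒳) (S : Set Ω) (Y : Ω → ℝ) (g estar : 𝒳 → ℝ)
    (w : Set 𝒳) : Ω → ℝ :=
  (X ⁻¹' w).indicator fun ω => g (X ω) + S.indicator (fun ω => (Y ω - g (X ω)) / estar (X ω)) ω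

theorem drIntegrand_eq {Y : Ω → ℝ} {e m g estar : 𝒳 → ℝ} (hestar0 : ∀ x, estar x ≠ 0)
    {w : Set 𝒳} (ω : Ω) :
    drIntegrand X S Y g estar w ω = (X ⁻¹' w).indicator (fun ω => m (X ω)) ω
      + w.indicator (fun x => (estar x)⁻¹) (X ω) * (e (X ω) - estar (X ω)) * (m (X ω) - g (X ω))
      + w.indicator (fun x => (estar x)⁻¹) (X ω) * S.indicator (fun ω => Y ω - m (X ω)) ω
      + w.indicator (fun x => (estar x)⁻¹) (X ω) * (m (X ω) - g (X ω))
          * (S.indicator 1 ω - e (X ω)) := by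
  have := hestar0 (X ω)
  by_cases hw : X ω ∈ w <;> by_cases hS : ω ∈ S <;>
    simp [drIntegrand, hw, hS] <;> field_simp <;> ring

variable [MeasurableSpace Ω] [MeasurableSpace 𝒳] {μ : Measure Ω} [IsFiniteMeasure μ]

theorem integral_comp_mul_indicator_sub_propensity_eq_zero (hX : Measurable X)
    (hS : MeasurableSet S) {e : 𝒳 → ℝ} (he : Measurable e) (he01 : ∀ x, 0 ≤ e x ∧ e x ≤ 1)
    (hePS : ∀ B : Set 𝒳, MeasurableSet B →
      ∫ ω in X ⁻¹' B, e (X ω) ∂μ = (μ (X ⁻¹' B ∩ S)).toReal)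
    {h : 𝒳 → ℝ} (hh : Measurable h) (hhX : Integrable (fun ω => h (X ω)) μ) :
    ∫ ω, h (X ω) * (S.indicator 1 ω - e (X ω)) ∂μ = 0 := by
  have heX : Integrable (fun ω => e (X ω)) μ :=
    (integrable_const (1 : ℝ)).mono' (he.comp hX).aestronglyMeasurable
      (.of_forall fun ω => by
        rw [Real.norm_eq_abs, abs_le]
        constructor <;> linarith [he01 (X ω)])
  have hSint : Integrable (S.indicator 1) μ := (integrable_const (1 : ℝ)).indicator hS
  refine integral_comp_mul_eq_zero_of_forall_setIntegral_preimage_eq_zero hX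
    (hSint.sub heX) (fun B hB => ?_) hh
    (hhX.mul_bdd (c := 1) ((measurable_const.indicator hS).sub (he.comp hX)).aestronglyMeasurable
      (.of_forall fun ω => ?_))
  · rw [Pi.sub_def, integral_sub hSint.integrableOn heX.integrableOn, hePS B hB,
      setIntegral_indicator hS]
    simp [measureReal_def]
  · exact abs_indicator_one_sub_le_one (he01 (X ω)).1 (he01 (X ω)).2

theorem integral_comp_mul_indicator_sub_regression_eq_zero (hX : Measurable X)
    (hS : MeasurableSet S) {Y : Ω → ℝ} (hY : Integrable Y μ) {m : 𝒳 → ℝ}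
    (hmX : Integrable (fun ω => m (X ω)) μ)
    (hmOR : ∀ B : Set 𝒳, MeasurableSet B →
      ∫ ω in X ⁻¹' B ∩ S, Y ω ∂μ = ∫ ω in X ⁻¹' B ∩ S, m (X ω) ∂μ)
    {h : 𝒳 → ℝ} (hh : Measurable h) {C : ℝ} (hC : ∀ x, |h x| ≤ C) :
    ∫ ω, h (X ω) * S.indicator (fun ω => Y ω - m (X ω)) ω ∂μ = 0 := by
  have hres : Integrable (S.indicator fun ω => Y ω - m (X ω)) μ := (hY.sub hmX).indicator hS
  refine integral_comp_mul_eq_zero_of_forall_setIntegral_preimage_eq_zero hX hres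
    (fun B hB => ?_) hh
    (hres.bdd_mul (hh.comp hX).aestronglyMeasurable (.of_forall fun ω => hC (X ω)))
  rw [setIntegral_indicator hS, integral_sub hY.integrableOn hmX.integrableOn, hmOR B hB, sub_self]

theorem integral_drIntegrand_sub_setIntegral_eq (hX : Measurable X) (hS : MeasurableSet S)
    {Y : Ω → ℝ} (hY : Integrable Y μ)
    {e : 𝒳 → ℝ} (he : Measurable e) (he01 : ∀ x, 0 ≤ e x ∧ e x ≤ 1)
    (hePS : ∀ B : Set 𝒳, MeasurableSet B →
      ∫ ω in X ⁻¹' B, e (X ω) ∂μ = (μ (X ⁻¹' B ∩ S)).toReal)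
    {m : 𝒳 → ℝ} (hm : Measurable m) (hmX : Integrable (fun ω => m (X ω)) μ)
    (hmOR : ∀ B : Set 𝒳, MeasurableSet B →
      ∫ ω in X ⁻¹' B ∩ S, Y ω ∂μ = ∫ ω in X ⁻¹' B ∩ S, m (X ω) ∂μ)
    {estar : 𝒳 → ℝ} (hestar : Measurable estar) {ε : ℝ} (hε : 0 < ε)
    (hestarε : ∀ x, ε ≤ estar x)
    {g : 𝒳 → ℝ} (hg : Measurable g) (hgX : Integrable (fun ω => g (X ω)) μ)
    {w : Set 𝒳} (hw : MeasurableSet w) :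
    ∫ ω, drIntegrand X S Y g estar w ω ∂μ - ∫ ω in X ⁻¹' w, m (X ω) ∂μ
      = ∫ ω, w.indicator (fun x => (estar x)⁻¹) (X ω) * (e (X ω) - estar (X ω))
          * (m (X ω) - g (X ω)) ∂μ := by
  set c := w.indicator fun x => (estar x)⁻¹
  have hc : Measurable c := hestar.inv.indicator hw
  have hcε : ∀ x, |c x| ≤ ε⁻¹ := abs_indicator_inv_le_inv hε hestarε
  set mw : Ω → ℝ := (X ⁻¹' w).indicator fun ω => m (X ω)
  set ρY : Ω → ℝ := fun ω => c (X ω) * S.indicator (fun ω => Y ω - m (X ω)) ω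
  set ρe : Ω → ℝ := fun ω => c (X ω) * (m (X ω) - g (X ω)) * (S.indicator 1 ω - e (X ω))
  have hsplit : (fun ω => c (X ω) * (e (X ω) - estar (X ω)) * (m (X ω) - g (X ω)))
      = drIntegrand X S Y g estar w - mw - ρY - ρe := by
    ext ω
    simp only [Pi.sub_apply, mw, ρY, ρe, c]
    rw [drIntegrand_eq (m := m) (e := e) (fun x => (hε.trans_le (hestarε x)).ne') ω]
    ring
  have hDR : Integrable (drIntegrand X S Y g estar w) μ := by
    have hq : Integrable (fun ω => (Y ω - g (X ω)) / estar (X ω)) μ := by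
      simp_rw [div_eq_mul_inv]
      refine (hY.sub hgX).mul_bdd (c := ε⁻¹) (hestar.comp hX).inv.aestronglyMeasurable
        (.of_forall fun ω => ?_)
      rw [norm_inv, Real.norm_of_nonneg (hε.le.trans (hestarε _))]
      exact inv_anti₀ hε (hestarε _)
    exact (hgX.add (hq.indicator hS)).indicator (hX hw)
  have hmw : Integrable mw μ := hmX.indicator (hX hw)
  have hρY : Integrable ρY μ :=
    ((hY.sub hmX).indicator hS).bdd_mul (hc.comp hX).aestronglyMeasurable
      (.of_forall fun ω => hcε (X ω))
  have hcmg : Integrable (fun ω => c (X ω) * (m (X ω) - g (X ω))) μ :=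
    (hmX.sub hgX).bdd_mul (hc.comp hX).aestronglyMeasurable (.of_forall fun ω => hcε (X ω))
  have hρe : Integrable ρe μ :=
    hcmg.mul_bdd ((measurable_const.indicator hS).sub (he.comp hX)).aestronglyMeasurable
      (.of_forall fun ω => abs_indicator_one_sub_le_one (he01 (X ω)).1 (he01 (X ω)).2)
  rw [hsplit, integral_sub' ((hDR.sub hmw).sub hρY) hρe, integral_sub' (hDR.sub hmw) hρY,
    integral_sub' hDR hmw,
    integral_comp_mul_indicator_sub_regression_eq_zero hX hS hY hmX hmOR hc hcε,
    integral_comp_mul_indicator_sub_propensity_eq_zero hX hS he he01 hePS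
      (h := fun x => c x * (m x - g x)) (hc.mul (hm.sub hg)) hcmg,
    integral_indicator (hX hw), sub_zero, sub_zero]

end DoublyRobust

theorem dr_product_bias_bound_general
    {Ω : Type*} [MeasurableSpace Ω] (P : Measure Ω) [IsProbabilityMeasure P]
    {𝒳 : Type*} [MeasurableSpace 𝒳]
    (X : Ω → 𝒳) (hX : Measurable X)
    (A : Ω → ℝ) (hA : Measurable A)
    (Y : Ω → ℝ) (hYint : Integrable Y P)
    (a : ℝ)
    -- a version of the propensity score, with 0 ≤ e_a ≤ 1
    (e : 𝒳 → ℝ) (he : Measurable e)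
    (he01 : ∀ x, 0 ≤ e x ∧ e x ≤ 1)
    (hePS : ∀ B : Set 𝒳, MeasurableSet B →
      ∫ ω in X ⁻¹' B, e (X ω) ∂P = (P (X ⁻¹' B ∩ {ω | A ω = a})).toReal)
    -- a version of the outcome regression E[Y | X, A = a]
    (m : 𝒳 → ℝ) (hm : Measurable m)
    (hmint : Integrable (fun ω => m (X ω)) P)
    (hmOR : ∀ B : Set 𝒳, MeasurableSet B →
      ∫ ω in X ⁻¹' B ∩ {ω | A ω = a}, Y ω ∂P
        = ∫ ω in X ⁻¹' B ∩ {ω | A ω = a}, m (X ω) ∂P)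
    -- ANY measurable propensity model bounded below by ε > 0
    (estar : 𝒳 → ℝ) (hestar : Measurable estar)
    (ε : ℝ) (hε : 0 < ε) (hestarpos : ∀ x, ε ≤ estar x)
    -- ANY measurable outcome model with integrable composition
    (g : 𝒳 → ℝ) (hg : Measurable g)
    (hgint : Integrable (fun ω => g (X ω)) P)
    -- square integrability
    (hmg2 : MemLp (fun ω => m (X ω) - g (X ω)) 2 P)
    (hee2 : MemLp (fun ω => e (X ω) - estar (X ω)) 2 P)
    -- the subgroup
    (w : Set 𝒳) (hw : MeasurableSet w) :
    |(∫ ω, (X ⁻¹' w).indicator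
        (fun ω' => g (X ω')
          + ({ω'' | A ω'' = a}).indicator
              (fun ω'' => (Y ω'' - g (X ω'')) / estar (X ω'')) ω') ω ∂P)
        - ∫ ω in X ⁻¹' w, m (X ω) ∂P|
      ≤ ε⁻¹ * (eLpNorm (fun ω => e (X ω) - estar (X ω)) 2 P).toReal
          * (eLpNorm (fun ω => m (X ω) - g (X ω)) 2 P).toReal := by
  have hS : MeasurableSet {ω | A ω = a} := hA (measurableSet_singleton a)
  calc _ = |∫ ω, w.indicator (fun x => (estar x)⁻¹) (X ω) * (e (X ω) - estar (X ω))
          * (m (X ω) - g (X ω)) ∂P| :=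
        congrArg abs (integral_drIntegrand_sub_setIntegral_eq hX hS hYint he he01 hePS hm hmint
          hmOR hestar hε hestarpos hg hgint hw)
    _ ≤ _ :=
        abs_integral_mul_mul_le_of_abs_le (inv_nonneg.2 hε.le)
          ((hestar.inv.indicator hw).comp hX).aestronglyMeasurable
          (.of_forall fun ω => abs_indicator_inv_le_inv hε hestarpos (X ω)) hee2 hmg2

/-- Product bias bound for the doubly robust functional (Cauchy–Schwarz
step in the rate-of-convergence proof):
`|E[1{X ∈ w}(g(X) + 1{A = a}(Y − g(X))/e*(X))] − ∫_{X ∈ w} m_a(X) dP|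
  ≤ ε⁻¹ ‖(e_a − e*) ∘ X‖_{L²(P)} ‖(m_a − g) ∘ X‖_{L²(P)}`. -/
theorem dr_product_bias_bound
    {Ω : Type*} [MeasurableSpace Ω] (P : Measure Ω) [IsProbabilityMeasure P]
    {𝒳 : Type*} [MeasurableSpace 𝒳]
    (X : Ω → 𝒳) (hX : Measurable X)
    (A : Ω → ℝ) (hA : Measurable A) (hA01 : ∀ ω, A ω = 0 ∨ A ω = 1)
    (Y : Ω → ℝ) (hY : Measurable Y) (hYint : Integrable Y P)
    (a : ℝ) (ha : a = 0 ∨ a = 1)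
    -- a version of the propensity score, with 0 ≤ e_a ≤ 1
    (e : 𝒳 → ℝ) (he : Measurable e)
    (he01 : ∀ x, 0 ≤ e x ∧ e x ≤ 1)
    (hePS : ∀ B : Set 𝒳, MeasurableSet B →
      ∫ ω in X ⁻¹' B, e (X ω) ∂P = (P (X ⁻¹' B ∩ {ω | A ω = a})).toReal)
    -- a version of the outcome regression E[Y | X, A = a]
    (m : 𝒳 → ℝ) (hm : Measurable m)
    (hmint : Integrable (fun ω => m (X ω)) P)
    (hmOR : ∀ B : Set 𝒳, MeasurableSet B →
      ∫ ω in X ⁻¹' B ∩ {ω | A ω = a}, Y ω ∂P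
        = ∫ ω in X ⁻¹' B ∩ {ω | A ω = a}, m (X ω) ∂P)
    -- ANY measurable propensity model bounded below by ε > 0
    (estar : 𝒳 → ℝ) (hestar : Measurable estar)
    (ε : ℝ) (hε : 0 < ε) (hestarpos : ∀ x, ε ≤ estar x)
    -- ANY measurable outcome model with integrable composition
    (g : 𝒳 → ℝ) (hg : Measurable g)
    (hgint : Integrable (fun ω => g (X ω)) P)
    -- square integrability
    (hmg2 : MemLp (fun ω => m (X ω) - g (X ω)) 2 P)
    (hee2 : MemLp (fun ω => e (X ω) - estar (X ω)) 2 P)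
    -- the subgroup
    (w : Set 𝒳) (hw : MeasurableSet w) :
    |(∫ ω, (X ⁻¹' w).indicator
        (fun ω' => g (X ω')
          + ({ω'' | A ω'' = a}).indicator
              (fun ω'' => (Y ω'' - g (X ω'')) / estar (X ω'')) ω') ω ∂P)
        - ∫ ω in X ⁻¹' w, m (X ω) ∂P|
      ≤ ε⁻¹ * (eLpNorm (fun ω => e (X ω) - estar (X ω)) 2 P).toReal
          * (eLpNorm (fun ω => m (X ω) - g (X ω)) 2 P).toReal :=
  dr_product_bias_bound_general P X hX A hA Y hYint a e he he01 hePS m hm hmint hmOR estar hestar ε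
    hε hestarpos g hg hgint hmg2 hee2 w hw
end

section
/- Sandwich variance computation for the inverse probability weighting splitting statistic (Theorem 2 of the paper, algebraic core): let E be a symmetric invertible n × n real matrix, h ∈ ℝⁿ, b₁₁, τ_l, τ_r ∈ ℝ, p_l > 0, p_r > 0, and set c = τ_l/p_l + τ_r/p_r and s = p_r·τ_l + p_l·τ_r. Let A = [[1, hᵀ, c], [0, E, 0], [0, 0, 1]] and B = [[b₁₁, hᵀ, s], [h, E, 0], [s, 0, p_l·p_r]] be (n+2) × (n+2) block matrices. Then the (1,1) entry of A⁻¹ · B · (A⁻¹)ᵀ equals b₁₁ − hᵀE⁻¹h − (p_r·τ_l + p_l·τ_r)² / (p_l·p_r). -/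
/-!
The matrix `A` is block upper unitriangular, so the first row of `A⁻¹` is `(1, -hᵀE⁻¹, -c)` and
the requested entry is the quadratic form of `B` at that row. In the `h`/`E` part the two cross
terms contribute `-2 hᵀE⁻¹h` and the middle block `+hᵀE⁻¹h`; in the last coordinate the cross
terms and the corner contribute `c² p_l p_r - 2cs = -s²/(p_l p_r)`, because `c p_l p_r = s`.
-/

open Matrix

namespace Matrix

variable {l m R : Type*} [Fintype l] [Fintype m] [CommRing R]

theorem mul_mul_transpose_apply_self (M N : Matrix m m R) (i : m) :
    (M * N * Mᵀ) i i = M i ⬝ᵥ N *ᵥ M i := by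
  rw [mul_apply_eq_vecMul, vecMul_transpose, mulVec, mul_apply_eq_vecMul, dotProduct_comm,
    dotProduct_mulVec]

theorem inv_fromBlocks_one_zero_apply_inl [DecidableEq l] [DecidableEq m] (U : Matrix l m R)
    (D : Matrix m m R) (hD : IsUnit D.det) (i : l) :
    (fromBlocks 1 U 0 D)⁻¹ (Sum.inl i) = Sum.elim (Pi.single i 1) (-(U * D⁻¹) i) := by
  rw [inv_fromBlocks_zero₂₁_of_isUnit_iff _ _ _ (by simp [(isUnit_iff_isUnit_det D).mpr hD])]
  ext (j | j) <;> simp [one_apply, Pi.single_apply, eq_comm]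

theorem vecMul_inv_dotProduct_mulVec_vecMul_inv [DecidableEq m] (E : Matrix m m R)
    (hE : IsUnit E.det) (x : m → R) :
    x ᵥ* E⁻¹ ⬝ᵥ E *ᵥ (x ᵥ* E⁻¹) = x ⬝ᵥ E⁻¹ *ᵥ x := by
  rw [dotProduct_mulVec, vecMul_vecMul, nonsing_inv_mul E hE, vecMul_one, dotProduct_comm,
    dotProduct_mulVec]

end Matrix

section IPW

variable {n : ℕ} {R : Type*} [CommRing R] (E : Matrix (Fin n) (Fin n) R) (h : Fin n → R)

theorem ipw_bread_inv_row (hE : IsUnit E.det) (c : R) :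
    (fromBlocks (1 : Matrix (Fin 1) (Fin 1) R)
      (fromCols (of fun _ j => h j) (of fun _ _ => c))
      (0 : Matrix (Fin n ⊕ Fin 1) (Fin 1) R)
      (fromBlocks E 0 0 (1 : Matrix (Fin 1) (Fin 1) R)))⁻¹ (Sum.inl 0)
      = Sum.elim (fun _ => 1) (Sum.elim (-(h ᵥ* E⁻¹)) (fun _ => -c)) := by
  rw [inv_fromBlocks_one_zero_apply_inl _ _ (by simpa using hE),
    inv_fromBlocks_zero₂₁_of_isUnit_iff _ _ _ (by simp [(isUnit_iff_isUnit_det E).mpr hE])]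
  ext (j | j | j) <;> simp [vecMul, dotProduct, mul_apply, one_apply, Fin.fin_one_eq_zero]

theorem ipw_meat_quadForm (b s q z : R) (y : Fin n → R) :
    Sum.elim (fun _ => 1) (Sum.elim y (fun _ => z)) ⬝ᵥ
      (fromBlocks (of fun _ _ => b)
        (fromCols (of fun _ j => h j) (of fun _ _ => s))
        (fromRows (of fun i _ => h i) (of fun _ _ => s))
        (fromBlocks E 0 0 (of fun _ _ => q)) :
        Matrix (Fin 1 ⊕ (Fin n ⊕ Fin 1)) (Fin 1 ⊕ (Fin n ⊕ Fin 1)) R) *ᵥ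
      Sum.elim (fun _ => 1) (Sum.elim y (fun _ => z))
      = b + 2 * (h ⬝ᵥ y) + y ⬝ᵥ E *ᵥ y + 2 * s * z + q * z ^ 2 := by
  simp only [fromBlocks_mulVec, sumElim_dotProduct_sumElim, fromCols_mulVec, fromRows_mulVec,
    dotProduct_add]
  simp only [dotProduct, mulVec, Finset.univ_unique, Fin.default_eq_zero, of_apply,
    Function.comp_apply, Sum.elim_inl, Sum.elim_inr, Sum.elim_comp_inr, Finset.sum_const,
    Finset.card_singleton, one_smul, mul_one, one_mul, mul_comm, Matrix.zero_apply, mul_zero]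
  ring

end IPW

theorem sandwich_variance_ipw_general
    {n : ℕ} (E : Matrix (Fin n) (Fin n) ℝ) (hE : IsUnit E.det)
    (h : Fin n → ℝ) (b11 τl τr pl pr : ℝ) (hpl : 0 < pl) (hpr : 0 < pr)
    (c s : ℝ) (hc : c = τl / pl + τr / pr) (hs : s = pr * τl + pl * τr)
    (A B : Matrix (Fin 1 ⊕ (Fin n ⊕ Fin 1)) (Fin 1 ⊕ (Fin n ⊕ Fin 1)) ℝ)
    (hA : A = Matrix.fromBlocks
      (1 : Matrix (Fin 1) (Fin 1) ℝ)
      (Matrix.fromCols (Matrix.of fun _ j => h j) (Matrix.of fun _ _ => c))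
      (0 : Matrix (Fin n ⊕ Fin 1) (Fin 1) ℝ)
      (Matrix.fromBlocks E 0 0 (1 : Matrix (Fin 1) (Fin 1) ℝ)))
    (hB : B = Matrix.fromBlocks
      (Matrix.of fun _ _ => b11)
      (Matrix.fromCols (Matrix.of fun _ j => h j) (Matrix.of fun _ _ => s))
      (Matrix.fromRows (Matrix.of fun i _ => h i) (Matrix.of fun _ _ => s))
      (Matrix.fromBlocks E 0 0 (Matrix.of fun _ _ => pl * pr))) :
    (A⁻¹ * B * (A⁻¹)ᵀ) (Sum.inl 0) (Sum.inl 0)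
      = b11 - h ⬝ᵥ (E⁻¹ *ᵥ h) - (pr * τl + pl * τr) ^ 2 / (pl * pr) := by
  subst hA hB
  have hquad := vecMul_inv_dotProduct_mulVec_vecMul_inv E hE h
  have hlin : h ⬝ᵥ h ᵥ* E⁻¹ = h ⬝ᵥ E⁻¹ *ᵥ h := by rw [dotProduct_mulVec, dotProduct_comm]
  have hcs : c = s / (pl * pr) := by rw [hc, hs]; field_simp
  rw [mul_mul_transpose_apply_self, ipw_bread_inv_row E h hE, ipw_meat_quadForm]
  simp only [mulVec_neg, dotProduct_neg, neg_dotProduct, neg_neg, hquad, hlin, hcs, ← hs]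
  field_simp
  ring

/-- Sandwich variance computation for the inverse probability weighting
splitting statistic (algebraic core of Theorem 2): with `c = τ_l/p_l + τ_r/p_r` and
`s = p_r·τ_l + p_l·τ_r`, the `(1,1)` entry of `A⁻¹ B (A⁻¹)ᵀ` equals
`b₁₁ − hᵀE⁻¹h − (p_r τ_l + p_l τ_r)²/(p_l p_r)`. -/
theorem sandwich_variance_ipw
    {n : ℕ} (E : Matrix (Fin n) (Fin n) ℝ) (hEsymm : E.IsSymm) (hE : IsUnit E.det)
    (h : Fin n → ℝ) (b11 τl τr pl pr : ℝ) (hpl : 0 < pl) (hpr : 0 < pr)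
    (c s : ℝ) (hc : c = τl / pl + τr / pr) (hs : s = pr * τl + pl * τr)
    (A B : Matrix (Fin 1 ⊕ (Fin n ⊕ Fin 1)) (Fin 1 ⊕ (Fin n ⊕ Fin 1)) ℝ)
    (hA : A = Matrix.fromBlocks
      (1 : Matrix (Fin 1) (Fin 1) ℝ)
      (Matrix.fromCols (Matrix.of fun _ j => h j) (Matrix.of fun _ _ => c))
      (0 : Matrix (Fin n ⊕ Fin 1) (Fin 1) ℝ)
      (Matrix.fromBlocks E 0 0 (1 : Matrix (Fin 1) (Fin 1) ℝ)))
    (hB : B = Matrix.fromBlocks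
      (Matrix.of fun _ _ => b11)
      (Matrix.fromCols (Matrix.of fun _ j => h j) (Matrix.of fun _ _ => s))
      (Matrix.fromRows (Matrix.of fun i _ => h i) (Matrix.of fun _ _ => s))
      (Matrix.fromBlocks E 0 0 (Matrix.of fun _ _ => pl * pr))) :
    (A⁻¹ * B * (A⁻¹)ᵀ) (Sum.inl 0) (Sum.inl 0)
      = b11 - h ⬝ᵥ (E⁻¹ *ᵥ h) - (pr * τl + pl * τr) ^ 2 / (pl * pr) :=
  sandwich_variance_ipw_general E hE h b11 τl τr pl pr hpl hpr c s hc hs A B hA hB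
end

section
/- Sandwich variance computation when propensity scores are estimated separately in the two child nodes (Theorem S-2 of the paper, algebraic core): let E_l (n × n) and E_r (m × m) be symmetric invertible real matrices, h_l ∈ ℝⁿ, h_r ∈ ℝᵐ, B₁₁, τ_l, τ_r ∈ ℝ, p_l > 0, p_r > 0, and set c = τ_l/p_l + τ_r/p_r and s = p_r·τ_l + p_l·τ_r. Let A = [[1, h_lᵀ, −h_rᵀ, c], [0, E_l, 0, 0], [0, 0, E_r, 0], [0, 0, 0, 1]] and B = [[B₁₁, h_lᵀ, −h_rᵀ, s], [h_l, E_l, 0, 0], [−h_r, 0, E_r, 0], [s, 0, 0, p_l·p_r]]. Then the (1,1) entry of A⁻¹ · B · (A⁻¹)ᵀ equals B₁₁ − h_lᵀE_l⁻¹h_l − h_rᵀE_r⁻¹h_r − (p_r·τ_l + p_l·τ_r)² / (p_l·p_r). -/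
open Matrix

/-! The matrix `A` is unit upper block-triangular, so the first row of `A⁻¹` is `(1, -u)` with
`u = t ᵥ* D⁻¹`, where `t = (h_l, -h_r, c)` and `D = diag(E_l, E_r, 1)`. The `(1,1)` entry of
`A⁻¹ B A⁻ᵀ` is the quadratic form of `B` at this row, `B₁₁ - 2 u ⬝ᵥ v + u ⬝ᵥ S u`, which splits
along the diagonal blocks of `D` and `S`. On a block `E` with vector `h`, the quadratic term equals
the cross term `hᵀE⁻¹h`, leaving `-hᵀE⁻¹h`; on the scalar block `c = s / (p_l p_r)` gives
`c² p_l p_r - 2 c s = -s² / (p_l p_r)`. -/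

theorem sumElim_dotProduct_fromBlocks_mulVec_sumElim {R ι κ : Type*} [NonUnitalNonAssocSemiring R]
    [Fintype ι] [Fintype κ] (x : ι → R) (y : κ → R)
    (P : Matrix ι ι R) (Q : Matrix ι κ R) (S : Matrix κ ι R) (T : Matrix κ κ R) :
    Sum.elim x y ⬝ᵥ (fromBlocks P Q S T *ᵥ Sum.elim x y)
      = x ⬝ᵥ (P *ᵥ x) + x ⬝ᵥ (Q *ᵥ y) + y ⬝ᵥ (S *ᵥ x) + y ⬝ᵥ (T *ᵥ y) := by
  simp only [fromBlocks_mulVec, Sum.elim_comp_inl, Sum.elim_comp_inr, sumElim_dotProduct_sumElim,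
    dotProduct_add, add_assoc]

section
variable {R ι κ : Type*} [CommRing R] [Fintype ι] [Fintype κ] [DecidableEq ι] [DecidableEq κ]

theorem vecMul_nonsing_inv_dotProduct_mulVec (E : Matrix κ κ R) (hE : IsUnit E.det) (x : κ → R) :
    (x ᵥ* E⁻¹) ⬝ᵥ (E *ᵥ (x ᵥ* E⁻¹)) = x ⬝ᵥ (E⁻¹ *ᵥ x) := by
  rw [dotProduct_mulVec, vecMul_vecMul, nonsing_inv_mul _ hE, vecMul_one, dotProduct_mulVec,
    dotProduct_comm]

theorem fromBlocks_zero_zero_inv (X : Matrix ι ι R) (Y : Matrix κ κ R) (hX : IsUnit X)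
    (hY : IsUnit Y) :
    (fromBlocks X 0 0 Y)⁻¹ = fromBlocks X⁻¹ 0 0 Y⁻¹ := by
  simp [inv_fromBlocks_zero₂₁_of_isUnit_iff _ _ _ (iff_of_true hX hY)]

theorem fromBlocks_one_replicateRow_inv_apply_inl (t : κ → R) (D : Matrix κ κ R) (hD : IsUnit D) :
    (fromBlocks (1 : Matrix (Fin 1) (Fin 1) R) (replicateRow (Fin 1) t) 0 D)⁻¹ (Sum.inl 0)
      = Sum.elim (fun _ => 1) (-(t ᵥ* D⁻¹)) := by
  rw [inv_fromBlocks_zero₂₁_of_isUnit_iff _ _ _ (iff_of_true isUnit_one hD)]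
  ext (j | j)
  · simp [Subsingleton.elim j 0]
  · simp [vecMul, dotProduct, mul_apply]

theorem fromBlocks_one_replicateRow_sandwich_apply_inl (t v : κ → R) (D S : Matrix κ κ R)
    (hD : IsUnit D) (b : R) :
    ((fromBlocks (1 : Matrix (Fin 1) (Fin 1) R) (replicateRow (Fin 1) t) 0 D)⁻¹
        * fromBlocks (of fun _ _ => b) (replicateRow (Fin 1) v) (replicateCol (Fin 1) v) S
        * ((fromBlocks (1 : Matrix (Fin 1) (Fin 1) R) (replicateRow (Fin 1) t) 0 D)⁻¹)ᵀ)
        (Sum.inl 0) (Sum.inl 0)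
      = b - 2 * ((t ᵥ* D⁻¹) ⬝ᵥ v) + (t ᵥ* D⁻¹) ⬝ᵥ (S *ᵥ (t ᵥ* D⁻¹)) := by
  rw [mul_mul_apply, transpose_transpose, fromBlocks_one_replicateRow_inv_apply_inl _ _ hD,
    sumElim_dotProduct_fromBlocks_mulVec_sumElim]
  simp only [replicateRow_mulVec_eq_const, mulVec_neg, dotProduct_neg]
  simp [dotProduct, mulVec, mul_comm (v _)]
  ring

end

theorem sandwich_variance_ipw_separate_general
    {n m : ℕ}
    (El : Matrix (Fin n) (Fin n) ℝ) (hEl : IsUnit El.det)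
    (Er : Matrix (Fin m) (Fin m) ℝ) (hEr : IsUnit Er.det)
    (hl : Fin n → ℝ) (hr : Fin m → ℝ)
    (B11 τl τr pl pr : ℝ) (hpl : 0 < pl) (hpr : 0 < pr)
    (c s : ℝ) (hc : c = τl / pl + τr / pr) (hs : s = pr * τl + pl * τr)
    (A B : Matrix (Fin 1 ⊕ (Fin n ⊕ (Fin m ⊕ Fin 1)))
                  (Fin 1 ⊕ (Fin n ⊕ (Fin m ⊕ Fin 1))) ℝ)
    (hA : A = Matrix.fromBlocks
      (1 : Matrix (Fin 1) (Fin 1) ℝ)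
      (Matrix.fromCols (Matrix.of fun _ j => hl j)
        (Matrix.fromCols (Matrix.of fun _ j => -hr j) (Matrix.of fun _ _ => c)))
      (0 : Matrix (Fin n ⊕ (Fin m ⊕ Fin 1)) (Fin 1) ℝ)
      (Matrix.fromBlocks El 0 0
        (Matrix.fromBlocks Er 0 0 (1 : Matrix (Fin 1) (Fin 1) ℝ))))
    (hB : B = Matrix.fromBlocks
      (Matrix.of fun _ _ => B11)
      (Matrix.fromCols (Matrix.of fun _ j => hl j)
        (Matrix.fromCols (Matrix.of fun _ j => -hr j) (Matrix.of fun _ _ => s)))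
      (Matrix.fromRows (Matrix.of fun i _ => hl i)
        (Matrix.fromRows (Matrix.of fun i _ => -hr i) (Matrix.of fun _ _ => s)))
      (Matrix.fromBlocks El 0 0
        (Matrix.fromBlocks Er 0 0 (Matrix.of fun _ _ => pl * pr)))) :
    (A⁻¹ * B * (A⁻¹)ᵀ) (Sum.inl 0) (Sum.inl 0)
      = B11 - hl ⬝ᵥ (El⁻¹ *ᵥ hl) - hr ⬝ᵥ (Er⁻¹ *ᵥ hr)
          - (pr * τl + pl * τr) ^ 2 / (pl * pr) := by
  have hEl' := (isUnit_iff_isUnit_det El).mpr hEl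
  have hEr' := (isUnit_iff_isUnit_det Er).mpr hEr
  have hEr1 : IsUnit (fromBlocks Er 0 0 (1 : Matrix (Fin 1) (Fin 1) ℝ)) :=
    isUnit_fromBlocks_zero₂₁.mpr ⟨hEr', isUnit_one⟩
  have hD : IsUnit (fromBlocks El 0 0 (fromBlocks Er 0 0 (1 : Matrix (Fin 1) (Fin 1) ℝ))) :=
    isUnit_fromBlocks_zero₂₁.mpr ⟨hEl', hEr1⟩
  have hA' : A = fromBlocks 1 (replicateRow (Fin 1) (Sum.elim hl (Sum.elim (-hr) fun _ => c))) 0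
      (fromBlocks El 0 0 (fromBlocks Er 0 0 1)) := by
    rw [hA]; rfl
  have hB' : B = fromBlocks (of fun _ _ => B11)
      (replicateRow (Fin 1) (Sum.elim hl (Sum.elim (-hr) fun _ => s)))
      (replicateCol (Fin 1) (Sum.elim hl (Sum.elim (-hr) fun _ => s)))
      (fromBlocks El 0 0 (fromBlocks Er 0 0 (of fun _ _ => pl * pr))) := by
    rw [hB]; congr 1; ext (i | i | i) _ <;> rfl
  rw [hA', hB', fromBlocks_one_replicateRow_sandwich_apply_inl _ _ _ _ hD,
    fromBlocks_zero_zero_inv _ _ hEl' hEr1, fromBlocks_zero_zero_inv _ _ hEr' isUnit_one]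
  simp only [inv_one, vecMul_fromBlocks, Sum.elim_comp_inl, Sum.elim_comp_inr, vecMul_zero,
    add_zero, vecMul_one, zero_add, sumElim_dotProduct_sumElim, dotProduct_neg, fromBlocks_mulVec,
    zero_mulVec]
  rw [vecMul_nonsing_inv_dotProduct_mulVec _ hEl, vecMul_nonsing_inv_dotProduct_mulVec _ hEr,
    ← dotProduct_mulVec, ← dotProduct_mulVec]
  simp only [dotProduct, mulVec, Pi.neg_apply, neg_mul, Finset.sum_neg_distrib, neg_neg,
    Finset.univ_unique, Fin.default_eq_zero, Finset.sum_singleton, mul_neg, of_apply]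
  subst hc hs
  field_simp
  ring

/-- Sandwich variance computation when propensity scores are estimated
separately in the two child nodes (algebraic core of Theorem S-2): with
`c = τ_l/p_l + τ_r/p_r` and `s = p_r·τ_l + p_l·τ_r`, the `(1,1)` entry of
`A⁻¹ B (A⁻¹)ᵀ` equals `B₁₁ − h_lᵀE_l⁻¹h_l − h_rᵀE_r⁻¹h_r − (p_r τ_l + p_l τ_r)²/(p_l p_r)`. -/
theorem sandwich_variance_ipw_separate
    {n m : ℕ}
    (El : Matrix (Fin n) (Fin n) ℝ) (hElsymm : El.IsSymm) (hEl : IsUnit El.det)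
    (Er : Matrix (Fin m) (Fin m) ℝ) (hErsymm : Er.IsSymm) (hEr : IsUnit Er.det)
    (hl : Fin n → ℝ) (hr : Fin m → ℝ)
    (B11 τl τr pl pr : ℝ) (hpl : 0 < pl) (hpr : 0 < pr)
    (c s : ℝ) (hc : c = τl / pl + τr / pr) (hs : s = pr * τl + pl * τr)
    (A B : Matrix (Fin 1 ⊕ (Fin n ⊕ (Fin m ⊕ Fin 1)))
                  (Fin 1 ⊕ (Fin n ⊕ (Fin m ⊕ Fin 1))) ℝ)
    (hA : A = Matrix.fromBlocks
      (1 : Matrix (Fin 1) (Fin 1) ℝ)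
      (Matrix.fromCols (Matrix.of fun _ j => hl j)
        (Matrix.fromCols (Matrix.of fun _ j => -hr j) (Matrix.of fun _ _ => c)))
      (0 : Matrix (Fin n ⊕ (Fin m ⊕ Fin 1)) (Fin 1) ℝ)
      (Matrix.fromBlocks El 0 0
        (Matrix.fromBlocks Er 0 0 (1 : Matrix (Fin 1) (Fin 1) ℝ))))
    (hB : B = Matrix.fromBlocks
      (Matrix.of fun _ _ => B11)
      (Matrix.fromCols (Matrix.of fun _ j => hl j)
        (Matrix.fromCols (Matrix.of fun _ j => -hr j) (Matrix.of fun _ _ => s)))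
      (Matrix.fromRows (Matrix.of fun i _ => hl i)
        (Matrix.fromRows (Matrix.of fun i _ => -hr i) (Matrix.of fun _ _ => s)))
      (Matrix.fromBlocks El 0 0
        (Matrix.fromBlocks Er 0 0 (Matrix.of fun _ _ => pl * pr)))) :
    (A⁻¹ * B * (A⁻¹)ᵀ) (Sum.inl 0) (Sum.inl 0)
      = B11 - hl ⬝ᵥ (El⁻¹ *ᵥ hl) - hr ⬝ᵥ (Er⁻¹ *ᵥ hr)
          - (pr * τl + pl * τr) ^ 2 / (pl * pr) :=
  sandwich_variance_ipw_separate_general El hEl Er hEr hl hr B11 τl τr pl pr hpl hpr c s hc hs A B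
    hA hB
end
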